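/- arXiv:2407.06711 — 7 statements merged into one kernel-verified Lean document; each statement's English description precedes it below -/
import Mathlib

section
/- Let Λ be a finite-dimensional k-algebra, M, M' finite-dimensional Λ-modules, and let 0 → M' →f M →g M'' be an exact sequence. Then g is right minimal (every endomorphism h : M → M with g∘h = g is an isomorphism) if and only if f belongs to the radical rad(M', M) of the Hom-space. -/
/-! Radical of Hom-spaces and right minimal morphisms. -/

universe u

/-- A module `L` is indecomposable if it is nontrivial and its only idempotent
endomorphisms are `0` and the identity. -/
def IsIndecomp (R : Type u) [Ring R] (L : Type u) [AddCommGroup L] [Module R L] : Prop :=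
  Nontrivial L ∧ ∀ e : L →ₗ[R] L, e ∘ₗ e = e → e = 0 ∨ e = LinearMap.id

/-- `f : M → M'` belongs to the radical `rad(M, M')` of the Hom-space: for every
(finite-dimensional) indecomposable module `L` and maps `s : L → M`, `t : M' → L`,
the composite `t ∘ f ∘ s` is not an isomorphism. -/
def IsRadHom (k : Type u) [Field k] (R : Type u) [Ring R] [Algebra k R]
    {M M' : Type u} [AddCommGroup M] [Module R M] [AddCommGroup M'] [Module R M']
    (f : M →ₗ[R] M') : Prop :=
  ∀ (L : Type u) [AddCommGroup L] [Module R L] [Module k L] [IsScalarTower k R L]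
    [FiniteDimensional k L], IsIndecomp R L →
    ∀ (s : L →ₗ[R] M) (t : M' →ₗ[R] L), ¬ Function.Bijective (t ∘ₗ f ∘ₗ s)

/-- Every nontrivial finite-dimensional module has an indecomposable retract. -/
theorem exists_indecomp_retract (k Λ : Type u) [Field k] [Ring Λ] [Algebra k Λ] :
    ∀ (n : ℕ) (K : Type u) (iA : AddCommGroup K) (iM : Module Λ K) (ik : Module k K)
      (iT : IsScalarTower k Λ K) (iF : FiniteDimensional k K),
      Module.finrank k K ≤ n → Nontrivial K →
      ∃ (L : Type u) (_ : AddCommGroup L) (_ : Module Λ L) (_ : Module k L)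
        (_ : IsScalarTower k Λ L) (_ : FiniteDimensional k L) (ι : L →ₗ[Λ] K) (π : K →ₗ[Λ] L),
        IsIndecomp Λ L ∧ π ∘ₗ ι = LinearMap.id := by
  intro n
  induction n with
  | zero =>
    intro K iA iM ik iT iF hrk hnt
    have : 0 < Module.finrank k K := Module.finrank_pos
    omega
  | succ n ih =>
    intro K iA iM ik iT iF hrk hnt
    by_cases hK : IsIndecomp Λ K
    · exact ⟨K, iA, iM, ik, iT, iF, LinearMap.id, LinearMap.id, hK, rfl⟩
    · rw [IsIndecomp, not_and] at hK
      push_neg at hK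
      obtain ⟨e, he2, he0, he1⟩ := hK hnt
      let p := LinearMap.range e
      haveI hFp : FiniteDimensional k ↥p :=
        inferInstanceAs (FiniteDimensional k ↥(p.restrictScalars k))
      haveI hntp : Nontrivial ↥p := by
        exact Submodule.nontrivial_iff_ne_bot.mpr
          (fun hb => he0 (LinearMap.range_eq_bot.mp hb))
      -- kernel is nontrivial since e ≠ id
      have hker : Nontrivial ↥(LinearMap.ker e) := by
        obtain ⟨x, hx⟩ : ∃ x, e x ≠ x := by
          by_contra hc; push_neg at hc
          exact he1 (LinearMap.ext fun x => hc x)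
        refine Submodule.nontrivial_iff_ne_bot.mpr fun hb => hx ?_
        have hxk : x - e x ∈ LinearMap.ker e := by
          have h2 := LinearMap.ext_iff.mp he2 x
          simp only [LinearMap.comp_apply] at h2
          simp [LinearMap.mem_ker, map_sub, h2]
        rw [hb, Submodule.mem_bot, sub_eq_zero] at hxk
        exact hxk.symm
      have hrk' : Module.finrank k ↥(LinearMap.range e) ≤ n := by
        haveI : FiniteDimensional k ↥(LinearMap.ker e) :=
          inferInstanceAs (FiniteDimensional k ↥((LinearMap.ker e).restrictScalars k))
        have h4 : Module.finrank k ↥(LinearMap.range e) + Module.finrank k ↥(LinearMap.ker e)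
            = Module.finrank k K := LinearMap.finrank_range_add_finrank_ker (e.restrictScalars k)
        have h5 : 0 < Module.finrank k ↥(LinearMap.ker e) := Module.finrank_pos
        omega
      obtain ⟨L, i1, i2, i3, i4, i5, ι, π, hL, hπι⟩ :=
        ih ↥p inferInstance inferInstance inferInstance inferInstance hFp hrk' hntp
      refine ⟨L, i1, i2, i3, i4, i5, p.subtype ∘ₗ ι,
        π ∘ₗ (e.codRestrict p fun x => LinearMap.mem_range_self e x), hL, ?_⟩
      have hfix : ∀ z : ↥p, e.codRestrict p (fun x => LinearMap.mem_range_self e x) ↑z = z := by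
        rintro ⟨z, y, rfl⟩
        ext
        have h2 := LinearMap.ext_iff.mp he2 y
        simpa only [LinearMap.comp_apply, LinearMap.codRestrict_apply] using h2
      ext x
      have : (π ∘ₗ ι) x = x := LinearMap.ext_iff.mp hπι x
      simpa [LinearMap.comp_apply, hfix (ι x)] using this

/-- Let `0 → M' →f M →g M''` be an exact sequence of finite-dimensional modules over a
finite-dimensional algebra `Λ`.  Then `g` is right minimal (every endomorphism `h` of `M`
with `g ∘ h = g` is an isomorphism) if and only if `f ∈ rad(M', M)`. -/
theorem rightMinimal_iff_radical
    (k Λ M' M M'' : Type u) [Field k] [Ring Λ] [Algebra k Λ] [FiniteDimensional k Λ]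
    [AddCommGroup M'] [Module Λ M'] [Module k M'] [IsScalarTower k Λ M'] [FiniteDimensional k M']
    [AddCommGroup M] [Module Λ M] [Module k M] [IsScalarTower k Λ M] [FiniteDimensional k M]
    [AddCommGroup M''] [Module Λ M''] [Module k M''] [IsScalarTower k Λ M'']
    [FiniteDimensional k M'']
    (f : M' →ₗ[Λ] M) (g : M →ₗ[Λ] M'')
    (hinj : Function.Injective f) (hex : Function.Exact f g) :
    (∀ h : M →ₗ[Λ] M, g ∘ₗ h = g → Function.Bijective h) ↔ IsRadHom k Λ f := by
  have hgf : ∀ x : M', g (f x) = 0 := fun x => hex.apply_apply_eq_zero x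
  constructor
  · -- right minimal → radical
    intro hmin L _ _ _ _ _ hL s t hbij
    let u : L ≃ₗ[Λ] L := LinearEquiv.ofBijective _ hbij
    let e : M →ₗ[Λ] M := f ∘ₗ s ∘ₗ (u.symm : L →ₗ[Λ] L) ∘ₗ t
    have hge : g ∘ₗ (LinearMap.id - e) = g := by
      ext x
      simp [e, LinearMap.sub_apply, hgf]
    have hbij' := hmin _ hge
    haveI : Nontrivial L := hL.1
    obtain ⟨x₀, hx₀⟩ := exists_ne (0 : L)
    have hu : u x₀ = t (f (s x₀)) := rfl
    have hfs : f (s x₀) ≠ 0 := by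
      intro hz
      apply hx₀
      have : u x₀ = 0 := by rw [hu, hz]; simp
      simpa using u.injective (by simpa using this)
    have hzero : (LinearMap.id - e : M →ₗ[Λ] M) (f (s x₀)) = 0 := by
      have he : e (f (s x₀)) = f (s x₀) := by
        show f (s (u.symm (t (f (s x₀))))) = f (s x₀)
        rw [← hu, u.symm_apply_apply]
      simp [LinearMap.sub_apply, he]
    exact hfs (hbij'.injective (by simpa using hzero))
  · -- radical → right minimal
    intro hrad h hgh
    by_contra hnb
    -- h is not injective
    have hni : ¬ Function.Injective h := by
      intro hi
      exact hnb ⟨hi, (LinearMap.injective_iff_surjective (f := h.restrictScalars k)).mp hi⟩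
    haveI : IsNoetherian Λ M := isNoetherian_of_tower k inferInstance
    haveI : IsArtinian Λ M := isArtinian_of_tower k inferInstance
    obtain ⟨n, hcompl, hn1⟩ :=
      (h.eventually_isCompl_ker_pow_range_pow.and (Filter.eventually_ge_atTop 1)).exists
    have ghn : ∀ m : ℕ, g ∘ₗ (h ^ m : Module.End Λ M) = g := by
      intro m
      induction m with
      | zero => simp [pow_zero, Module.End.one_eq_id]
      | succ m ihm =>
        rw [pow_succ, Module.End.mul_eq_comp, ← LinearMap.comp_assoc, ihm, hgh]
    -- the kernel of h^n is contained in range f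
    have hKf : LinearMap.ker ((h : Module.End Λ M) ^ n) ≤ LinearMap.range f := by
      intro x hx
      rw [← hex.linearMap_ker_eq, LinearMap.mem_ker]
      have := LinearMap.ext_iff.mp (ghn n) x
      simp only [LinearMap.comp_apply] at this
      rw [← this, LinearMap.mem_ker.mp hx, map_zero]
    -- the kernel of h^n is nontrivial
    haveI hntK : Nontrivial ↥(LinearMap.ker ((h : Module.End Λ M) ^ n)) := by
      obtain ⟨x, hxk, hx0⟩ := (Submodule.ne_bot_iff _).mp
        (fun hb => hni (LinearMap.ker_eq_bot.mp hb))
      obtain ⟨m, rfl⟩ : ∃ m, n = m + 1 := ⟨n - 1, by omega⟩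
      refine Submodule.nontrivial_iff_ne_bot.mpr ((Submodule.ne_bot_iff _).mpr ⟨x, ?_, hx0⟩)
      rw [LinearMap.mem_ker, pow_succ, Module.End.mul_eq_comp, LinearMap.comp_apply,
        LinearMap.mem_ker.mp hxk, map_zero]
    haveI : FiniteDimensional k ↥(LinearMap.ker ((h : Module.End Λ M) ^ n)) :=
      inferInstanceAs
        (FiniteDimensional k ↥((LinearMap.ker ((h : Module.End Λ M) ^ n)).restrictScalars k))
    set K := LinearMap.ker ((h : Module.End Λ M) ^ n) with hK
    obtain ⟨L, i1, i2, i3, i4, i5, ι, π, hL, hπι⟩ :=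
      exists_indecomp_retract k Λ (Module.finrank k ↥K) ↥K
        inferInstance inferInstance inferInstance inferInstance inferInstance le_rfl hntK
    let ι' : L →ₗ[Λ] M := K.subtype ∘ₗ ι
    let πK : M →ₗ[Λ] ↥K := K.linearProjOfIsCompl _ hcompl
    have hmem : ∀ x : L, ι' x ∈ LinearMap.range f := fun x => hKf (ι x).2
    let s : L →ₗ[Λ] M' :=
      ((LinearEquiv.ofInjective f hinj).symm : LinearMap.range f →ₗ[Λ] M') ∘ₗ
        (ι'.codRestrict (LinearMap.range f) hmem)
    have hfs : ∀ x : L, f (s x) = ι' x := by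
      intro x
      show f ((LinearEquiv.ofInjective f hinj).symm ⟨ι' x, hmem x⟩) = ι' x
      have := (LinearEquiv.ofInjective f hinj).apply_symm_apply ⟨ι' x, hmem x⟩
      calc f ((LinearEquiv.ofInjective f hinj).symm ⟨ι' x, hmem x⟩)
          = ↑((LinearEquiv.ofInjective f hinj)
              ((LinearEquiv.ofInjective f hinj).symm ⟨ι' x, hmem x⟩)) := by
            rw [LinearEquiv.ofInjective_apply]
        _ = ι' x := by rw [this]
    refine hrad L hL s (π ∘ₗ πK) ?_
    have : (π ∘ₗ πK) ∘ₗ f ∘ₗ s = LinearMap.id := by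
      ext x
      have h1 : πK (ι' x) = ι x := Submodule.linearProjOfIsCompl_apply_left hcompl (ι x)
      have h2 := LinearMap.ext_iff.mp hπι x
      simp only [LinearMap.comp_apply, LinearMap.id_apply] at h2 ⊢
      rw [hfs x, h1, h2]
    rw [this]
    exact Function.bijective_id
end

section
/- Let G be a finite group acting on a finite-dimensional algebra Λ, A = Λ*G, N an A-module. Then kG ⊗_k^G N (where kG carries the left regular G-action) is isomorphic as an A-module to A ⊗_Λ N (the induction of the restriction of N), via φ(g ⊗ n) = (1*g) ⊗ (1*g⁻¹)n. -/
/-! For an `A = Λ * G`-module `N`, `kG ⊗_k^G N` (regular `G`-action on `kG`) is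
isomorphic as an `A`-module to the induction `A ⊗_Λ (Res_Λ N)`, via
`g ⊗ n ↦ (1*g) ⊗ (1*g⁻¹)·n`. -/

open scoped TensorProduct

universe u

/-- An axiomatization of the skew group algebra `A = Λ * G`. -/
structure SkewGroupAlgebra (k : Type u) [Field k] (Λ : Type u) [Ring Λ] [Algebra k Λ]
    (G : Type u) [Group G] [Fintype G] (σ : G →* (Λ ≃ₐ[k] Λ))
    (A : Type u) [Ring A] [Algebra k A] : Type u where
  ι : Λ →ₐ[k] A
  u : G →* Aˣ
  skew_comm : ∀ (g : G) (r : Λ), (u g : A) * ι r = ι (σ g r) * (u g : A)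
  repr_unique : ∀ a : A, ∃! c : G → Λ, a = ∑ g : G, ι (c g) * (u g : A)

/-- `T` is (a realization of) the `A`-module `X ⊗_k^G N`. -/
structure IsGTensor {k Λ G A : Type u} [Field k] [Ring Λ] [Algebra k Λ]
    [Group G] [Fintype G] {σ : G →* (Λ ≃ₐ[k] Λ)} [Ring A] [Algebra k A]
    (S : SkewGroupAlgebra k Λ G σ A)
    (X : Type u) [AddCommGroup X] [Module k X] (ρ : Representation k G X)
    (N : Type u) [AddCommGroup N] [Module A N] [Module k N] [IsScalarTower k A N]
    (T : Type u) [AddCommGroup T] [Module A T] : Type u where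
  e : X ⊗[k] N ≃+ T
  smul_e : ∀ (r : Λ) (g : G) (x : X) (n : N),
    (S.ι r * (S.u g : A)) • e (x ⊗ₜ[k] n) = e (ρ g x ⊗ₜ[k] ((S.ι r * (S.u g : A)) • n))

/-- `I` is (a realization of) the `A`-module `A ⊗_Λ (Res_Λ N)`, the induction of the
restriction of the `A`-module `N`. -/
structure IsInducedOfRes {k Λ G A : Type u} [Field k] [Ring Λ] [Algebra k Λ]
    [Group G] [Fintype G] {σ : G →* (Λ ≃ₐ[k] Λ)} [Ring A] [Algebra k A]
    (S : SkewGroupAlgebra k Λ G σ A)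
    (N : Type u) [AddCommGroup N] [Module A N]
    (I : Type u) [AddCommGroup I] [Module A I] : Type u where
  unit : N →+ I
  unit_smul : ∀ (r : Λ) (n : N), unit (S.ι r • n) = S.ι r • unit n
  universal : ∀ (P : Type u) [AddCommGroup P] [Module A P] (f : N →+ P),
    (∀ (r : Λ) (n : N), f (S.ι r • n) = S.ι r • f n) →
    ∃! F : I →ₗ[A] P, ∀ n, F (unit n) = f n

/-- The permutation representation on `H →₀ k` induced by a `G`-action on `H`
(the meaning `Representation.ofMulAction` had in the older Mathlib). -/
noncomputable def ofMulActionFinsupp (k : Type*) [Semiring k] (G : Type*) [Monoid G]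
    (H : Type*) [MulAction G H] : Representation k G (H →₀ k) where
  toFun g := Finsupp.lmapDomain k k (g • ·)
  map_one' := by ext; simp
  map_mul' x y := by ext; simp [mul_smul]

lemma ofMulActionFinsupp_single (k : Type*) [Semiring k] (G : Type*) [Monoid G]
    (H : Type*) [MulAction G H] (g : G) (x : H) (c : k) :
    ofMulActionFinsupp k G H g (Finsupp.single x c) = Finsupp.single (g • x) c := by
  show Finsupp.mapDomain (g • ·) (Finsupp.single x c) = _
  exact Finsupp.mapDomain_single

set_option linter.unusedSectionVars false

namespace SkewGroupAlgebra

variable {k Λ G A : Type u} [Field k] [Ring Λ] [Algebra k Λ]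
    [Group G] [Fintype G] {σ : G →* (Λ ≃ₐ[k] Λ)} [Ring A] [Algebra k A]
    (S : SkewGroupAlgebra k Λ G σ A)

lemma u_mul (g h : G) : (S.u g : A) * (S.u h : A) = (S.u (g * h) : A) := by
  rw [← Units.val_mul, ← map_mul]

lemma u_inv_mul (g : G) : (S.u g⁻¹ : A) * (S.u g : A) = 1 := by
  rw [u_mul, inv_mul_cancel, map_one, Units.val_one]

lemma u_mul_inv (g : G) : (S.u g : A) * (S.u g⁻¹ : A) = 1 := by
  rw [u_mul, mul_inv_cancel, map_one, Units.val_one]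

lemma conj (g : G) (r : Λ) :
    (S.u g⁻¹ : A) * S.ι r * (S.u g : A) = S.ι (σ g⁻¹ r) := by
  rw [S.skew_comm g⁻¹ r, mul_assoc, u_inv_mul, mul_one]

lemma ι_algebraMap (c : k) : S.ι (algebraMap k Λ c) = algebraMap k A c := S.ι.commutes c

lemma sigma_cancel (g : G) (z : Λ) : σ g (σ g⁻¹ z) = z := by
  rw [← AlgEquiv.mul_apply, ← map_mul, mul_inv_cancel, map_one, AlgEquiv.one_apply]

variable (N : Type u) [AddCommGroup N] [Module A N] [Module k N] [IsScalarTower k A N]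
variable (I : Type u) [AddCommGroup I] [Module A I] (hI : IsInducedOfRes S N I)

noncomputable def jmap (g : G) : k →+ (N →+ I) where
  toFun c :=
    { toFun := fun n => (S.u g : A) • hI.unit ((S.u g⁻¹ : A) • c • n)
      map_zero' := by simp
      map_add' := fun a b => by simp [smul_add, map_add] }
  map_zero' := by ext n; simp
  map_add' a b := by ext n; simp [add_smul, smul_add, map_add]

noncomputable def Fmap : (G →₀ k) →+ (N →+ I) := Finsupp.liftAddHom (fun g => jmap S N I hI g)

lemma Fmap_single (g : G) (c : k) (n : N) :
    Fmap S N I hI (Finsupp.single g c) n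
      = (S.u g : A) • hI.unit ((S.u g⁻¹ : A) • c • n) := by
  simp [Fmap, jmap]

noncomputable def phi0 : (G →₀ k) ⊗[k] N →+ I :=
  TensorProduct.liftAddHom (Fmap S N I hI) (by
    intro c x n
    induction x using Finsupp.induction_linear with
    | zero => simp
    | add f g hf hg => simp only [smul_add, map_add, AddMonoidHom.add_apply, hf, hg]
    | single h c' =>
        rw [Finsupp.smul_single, Fmap_single, Fmap_single, smul_eq_mul, mul_comm,
          mul_smul])

lemma phi0_tmul (x : G →₀ k) (n : N) :
    phi0 S N I hI (x ⊗ₜ[k] n) = Fmap S N I hI x n :=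
  TensorProduct.liftAddHom_tmul _ _ _ _

lemma key (r : Λ) (g : G) (x : G →₀ k) (n : N) :
    phi0 S N I hI ((ofMulActionFinsupp k G G g x) ⊗ₜ[k] ((S.ι r * (S.u g : A)) • n))
      = (S.ι r * (S.u g : A)) • phi0 S N I hI (x ⊗ₜ[k] n) := by
  induction x using Finsupp.induction_linear with
  | zero => simp
  | add f f' hf hf' =>
      rw [map_add, TensorProduct.add_tmul, map_add, hf, hf',
        TensorProduct.add_tmul, map_add, smul_add]
  | single h c =>
      rw [ofMulActionFinsupp_single, smul_eq_mul, phi0_tmul, phi0_tmul,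
        Fmap_single, Fmap_single]
      have hcs : ∀ m : N, c • m = (algebraMap k A c) • m :=
        fun m => (IsScalarTower.algebraMap_smul A c m).symm
      simp only [hcs, smul_smul]
      have e1 : (S.u (g*h)⁻¹ : A) * (algebraMap k A c * (S.ι r * (S.u g : A)))
          = S.ι (σ (g*h)⁻¹ (algebraMap k Λ c * r)) * (S.u h⁻¹ : A) := by
        have hg : (S.u g : A) = (S.u (g*h) : A) * (S.u h⁻¹ : A) := by
          rw [u_mul, mul_inv_cancel_right]
        rw [← S.ι_algebraMap, hg, ← S.conj (g*h) (algebraMap k Λ c * r), map_mul S.ι]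
        simp [mul_assoc]
      have e2 : (S.u h⁻¹ : A) * algebraMap k A c
          = S.ι (algebraMap k Λ c) * (S.u h⁻¹ : A) := by
        rw [← Algebra.commutes, S.ι_algebraMap]
      rw [e1, e2, mul_smul (S.ι _) ((S.u h⁻¹ : A)) n, hI.unit_smul,
        mul_smul (S.ι (algebraMap k Λ c)) ((S.u h⁻¹ : A)) n, hI.unit_smul,
        smul_smul, smul_smul]
      congr 1
      calc (S.u (g*h) : A) * S.ι (σ (g*h)⁻¹ (algebraMap k Λ c * r))
          = S.ι (algebraMap k Λ c * r) * (S.u (g*h) : A) := by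
            rw [S.skew_comm, sigma_cancel]
        _ = algebraMap k A c * (S.ι r * (S.u (g*h) : A)) := by
            rw [map_mul S.ι, S.ι_algebraMap, mul_assoc]
        _ = (S.ι r * (S.u (g*h) : A)) * algebraMap k A c := Algebra.commutes _ _
        _ = S.ι r * (S.u g : A) * (S.u h : A) * S.ι (algebraMap k Λ c) := by
            rw [← u_mul, S.ι_algebraMap]
            simp [mul_assoc]

end SkewGroupAlgebra

namespace SkewGroupAlgebra

variable {k Λ G A : Type u} [Field k] [Ring Λ] [Algebra k Λ]
    [Group G] [Fintype G] {σ : G →* (Λ ≃ₐ[k] Λ)} [Ring A] [Algebra k A]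
    (S : SkewGroupAlgebra k Λ G σ A)
    (N : Type u) [AddCommGroup N] [Module A N] [Module k N] [IsScalarTower k A N]
    (I : Type u) [AddCommGroup I] [Module A I] (hI : IsInducedOfRes S N I)
    (T : Type u) [AddCommGroup T] [Module A T]
    (hT : IsGTensor S (G →₀ k) (ofMulActionFinsupp k G G) N T)

noncomputable def PhiAdd : T →+ I :=
  (phi0 S N I hI).comp hT.e.symm.toAddMonoidHom

lemma PhiAdd_e (z : (G →₀ k) ⊗[k] N) :
    PhiAdd S N I hI T hT (hT.e z) = phi0 S N I hI z := by
  simp [PhiAdd]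

lemma PhiAdd_gen (r : Λ) (g : G) (z : (G →₀ k) ⊗[k] N) :
    PhiAdd S N I hI T hT ((S.ι r * (S.u g : A)) • hT.e z)
      = (S.ι r * (S.u g : A)) • PhiAdd S N I hI T hT (hT.e z) := by
  induction z using TensorProduct.induction_on with
  | zero => simp
  | tmul x n => rw [hT.smul_e, PhiAdd_e, PhiAdd_e, key]
  | add z1 z2 h1 h2 =>
      rw [map_add hT.e, smul_add, map_add, h1, h2, map_add, smul_add]

lemma PhiAdd_smul (a : A) (t : T) :
    PhiAdd S N I hI T hT (a • t) = a • PhiAdd S N I hI T hT t := by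
  obtain ⟨cf, hcf, -⟩ := S.repr_unique a
  rw [hcf, Finset.sum_smul, Finset.sum_smul, map_sum]
  refine Finset.sum_congr rfl fun g _ => ?_
  have h := PhiAdd_gen S N I hI T hT (cf g) g (hT.e.symm t)
  rwa [hT.e.apply_symm_apply] at h

noncomputable def Phi : T →ₗ[A] I where
  toFun := PhiAdd S N I hI T hT
  map_add' := map_add _
  map_smul' := PhiAdd_smul S N I hI T hT

lemma Phi_e (z : (G →₀ k) ⊗[k] N) :
    Phi S N I hI T hT (hT.e z) = phi0 S N I hI z :=
  PhiAdd_e S N I hI T hT z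

end SkewGroupAlgebra

open SkewGroupAlgebra

/-- `kG ⊗_k^G N ≅ A ⊗_Λ (Res_Λ N)` as `A`-modules, via `φ(g ⊗ n) = (1*g) ⊗ (1*g⁻¹)·n`. -/
theorem gTensor_regular_iso_inducedOfRes
    (k Λ G A : Type u) [Field k] [Ring Λ] [Algebra k Λ] [FiniteDimensional k Λ]
    [Group G] [Fintype G] (σ : G →* (Λ ≃ₐ[k] Λ)) [Ring A] [Algebra k A]
    (S : SkewGroupAlgebra k Λ G σ A)
    (N : Type u) [AddCommGroup N] [Module A N] [Module k N] [IsScalarTower k A N]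
    (T : Type u) [AddCommGroup T] [Module A T]
    (I : Type u) [AddCommGroup I] [Module A I]
    (hT : IsGTensor S (G →₀ k) (ofMulActionFinsupp k G G) N T)
    (hI : IsInducedOfRes S N I) :
    ∃ φ : T ≃ₗ[A] I, ∀ (g : G) (n : N),
      φ (hT.e (Finsupp.single g (1 : k) ⊗ₜ[k] n)) =
        (S.u g : A) • hI.unit ((↑(S.u g⁻¹) : A) • n) := by
  -- the inverse map, from the universal property
  set f : N →+ T :=
    AddMonoidHom.mk' (fun n => hT.e (Finsupp.single (1:G) (1:k) ⊗ₜ[k] n))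
      (fun a b => by simp [TensorProduct.tmul_add]) with hf_def
  have hf : ∀ (r : Λ) (n : N), f (S.ι r • n) = S.ι r • f n := by
    intro r n
    have h := hT.smul_e r 1 (Finsupp.single (1:G) (1:k)) n
    simp only [map_one, Units.val_one, mul_one, ofMulActionFinsupp_single,
      smul_eq_mul, one_mul] at h
    simpa [hf_def] using h.symm
  obtain ⟨Ψ, hΨ, -⟩ := hI.universal T f hf
  have hΨ' : ∀ n : N, Ψ (hI.unit n) = hT.e (Finsupp.single (1:G) (1:k) ⊗ₜ[k] n) := hΨ
  -- Φ ∘ Ψ = id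
  have h1 : (Phi S N I hI T hT).comp Ψ = LinearMap.id := by
    obtain ⟨F, -, hFuniq⟩ := hI.universal I hI.unit hI.unit_smul
    have hA : (Phi S N I hI T hT).comp Ψ = F := by
      refine hFuniq _ fun n => ?_
      simp only [LinearMap.comp_apply, hΨ', Phi_e, phi0_tmul, Fmap_single]
      simp
    have hB : (LinearMap.id : I →ₗ[A] I) = F := hFuniq _ fun n => rfl
    rw [hA, hB]
  -- Ψ ∘ Φ = id
  have h2 : Ψ.comp (Phi S N I hI T hT) = LinearMap.id := by
    apply LinearMap.ext
    intro t
    rw [← hT.e.apply_symm_apply t]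
    generalize hT.e.symm t = z
    induction z using TensorProduct.induction_on with
    | zero => simp
    | tmul x n =>
        simp only [LinearMap.comp_apply, LinearMap.id_apply, Phi_e, phi0_tmul]
        induction x using Finsupp.induction_linear with
        | zero => simp
        | add x1 x2 hx1 hx2 =>
            rw [map_add, AddMonoidHom.add_apply, map_add, TensorProduct.add_tmul,
              map_add, hx1, hx2]
        | single g c =>
            rw [Fmap_single, map_smul, hΨ']
            have h := hT.smul_e 1 g (Finsupp.single (1:G) (1:k))
              ((S.u g⁻¹ : A) • c • n)
            simp only [map_one, one_mul, ofMulActionFinsupp_single,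
              smul_eq_mul, mul_one] at h
            rw [h, smul_smul, u_mul_inv, one_smul,
              show Finsupp.single g c = c • Finsupp.single g (1:k) by
                rw [Finsupp.smul_single, smul_eq_mul, mul_one],
              TensorProduct.smul_tmul]
    | add z1 z2 hz1 hz2 =>
        rw [map_add, map_add, map_add, hz1, hz2]
  refine ⟨LinearEquiv.ofLinear (Phi S N I hI T hT) Ψ h1 h2, fun g n => ?_⟩
  rw [LinearEquiv.ofLinear_apply, Phi_e, phi0_tmul, Fmap_single, one_smul]
end

section
/- Let G be a finite group acting on a finite-dimensional algebra Λ, A = Λ*G, and N a finite-dimensional A-module. Then there is an isomorphism of right Λ-modules Res_Λ(Hom_A(N, A)) ≅ Hom_Λ(Res_Λ N, Λ), natural in N. -/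
/-! For an `A = Λ * G`-module `N`, the restriction to `Λ` of `Hom_A(N, A)` is isomorphic
to `Hom_Λ(Res_Λ N, Λ)` as a right `Λ`-module. -/

universe u

/-- The additive group of `Λ`-linear maps `Res_Λ N → Λ`, realized as those additive maps
`h : N → Λ` with `h((r*1)·n) = r · h(n)` for all `r ∈ Λ`. -/
def resHomSubgroup {k Λ G A : Type u} [Field k] [Ring Λ] [Algebra k Λ]
    [Group G] [Fintype G] {σ : G →* (Λ ≃ₐ[k] Λ)} [Ring A] [Algebra k A]
    (S : SkewGroupAlgebra k Λ G σ A)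
    (N : Type u) [AddCommGroup N] [Module A N] : AddSubgroup (N →+ Λ) where
  carrier := {h | ∀ (r : Λ) (n : N), h (S.ι r • n) = r * h n}
  add_mem' := by
    intro a b ha hb r n
    simp [ha r n, hb r n, mul_add]
  zero_mem' := by intro r n; simp
  neg_mem' := by
    intro a ha r n
    simp [ha r n]

namespace SkewGroupAlgebra

variable {k Λ G A : Type u} [Field k] [Ring Λ] [Algebra k Λ]
  [Group G] [Fintype G] {σ : G →* (Λ ≃ₐ[k] Λ)} [Ring A] [Algebra k A]
  (S : SkewGroupAlgebra k Λ G σ A)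

/-- The coefficients of `a : A` in the basis indexed by `G`. -/
noncomputable def coeff (a : A) : G → Λ := (S.repr_unique a).choose

lemma sum_coeff (a : A) : a = ∑ g : G, S.ι (S.coeff a g) * (S.u g : A) :=
  (S.repr_unique a).choose_spec.1

lemma coeff_unique {a : A} {c : G → Λ} (h : a = ∑ g : G, S.ι (c g) * (S.u g : A)) :
    S.coeff a = c :=
  ((S.repr_unique a).choose_spec.2 c h).symm

lemma coeff_add (a b : A) : S.coeff (a + b) = S.coeff a + S.coeff b := by
  apply S.coeff_unique
  simp only [Pi.add_apply, map_add, add_mul, Finset.sum_add_distrib]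
  rw [← S.sum_coeff a, ← S.sum_coeff b]

lemma coeff_zero : S.coeff (0 : A) = 0 := by
  apply S.coeff_unique
  simp

lemma coeff_ι_mul (r : Λ) (a : A) :
    S.coeff (S.ι r * a) = fun g => r * S.coeff a g := by
  apply S.coeff_unique
  simp only [map_mul, mul_assoc, ← Finset.mul_sum]
  rw [← S.sum_coeff a]

lemma coeff_mul_ι (a : A) (r : Λ) :
    S.coeff (a * S.ι r) = fun g => S.coeff a g * σ g r := by
  apply S.coeff_unique
  have : ∀ g : G, S.ι (S.coeff a g * σ g r) * (S.u g : A)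
      = (S.ι (S.coeff a g) * (S.u g : A)) * S.ι r := by
    intro g
    rw [map_mul, mul_assoc, ← S.skew_comm g r, mul_assoc]
  simp only [this, ← Finset.sum_mul]
  rw [← S.sum_coeff a]

lemma coeff_u_mul (g' : G) (a : A) :
    S.coeff ((S.u g' : A) * a) = fun g => σ g' (S.coeff a (g'⁻¹ * g)) := by
  apply S.coeff_unique
  rw [show (∑ g : G, S.ι (σ g' (S.coeff a (g'⁻¹ * g))) * (S.u g : A))
      = ∑ h : G, (S.u g' : A) * (S.ι (S.coeff a h) * (S.u h : A)) from
    (Fintype.sum_equiv (Equiv.mulLeft g')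
      (fun h => (S.u g' : A) * (S.ι (S.coeff a h) * (S.u h : A)))
      (fun g => S.ι (σ g' (S.coeff a (g'⁻¹ * g))) * (S.u g : A))
      (fun h => by
        simp only [Equiv.coe_mulLeft, inv_mul_cancel_left]
        rw [← mul_assoc, S.skew_comm g' (S.coeff a h), mul_assoc, map_mul,
          Units.val_mul])).symm]
  rw [← Finset.mul_sum, ← S.sum_coeff a]

lemma sigma_apply_inv_apply (g : G) (r : Λ) : σ g (σ g⁻¹ r) = r := by
  have h : σ g⁻¹ = (σ g).symm := by rw [map_inv]; rfl
  rw [h]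
  exact (σ g).apply_symm_apply r

lemma sigma_one_apply (r : Λ) : σ (1 : G) r = r := by
  rw [map_one]; rfl

variable (N : Type u) [AddCommGroup N] [Module A N]

lemma mem_resHom_apply (h : resHomSubgroup S N) (r : Λ) (n : N) :
    (h : N →+ Λ) (S.ι r • n) = r * (h : N →+ Λ) n := h.2 r n

/-- The inverse construction: from `h : Hom_Λ(Res N, Λ)` build a map `N → A`. -/
noncomputable def invF (h : resHomSubgroup S N) : N →+ A where
  toFun n := ∑ g : G, S.ι (σ g ((h : N →+ Λ) ((↑(S.u g⁻¹) : A) • n))) * (S.u g : A)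
  map_zero' := by simp
  map_add' n m := by
    simp only [smul_add, map_add, add_mul, Finset.sum_add_distrib]

lemma invF_apply (h : resHomSubgroup S N) (n : N) :
    S.invF N h n = ∑ g : G, S.ι (σ g ((h : N →+ Λ) ((↑(S.u g⁻¹) : A) • n))) * (S.u g : A) :=
  rfl

lemma invF_ι_smul (h : resHomSubgroup S N) (r : Λ) (n : N) :
    S.invF N h (S.ι r • n) = S.ι r * S.invF N h n := by
  rw [invF_apply, invF_apply, Finset.mul_sum]
  refine Finset.sum_congr rfl fun g _ => ?_
  have h1 : (↑(S.u g⁻¹) : A) • (S.ι r • n) = S.ι (σ g⁻¹ r) • ((↑(S.u g⁻¹) : A) • n) := by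
    rw [← mul_smul, ← mul_smul, S.skew_comm g⁻¹ r]
  rw [h1, S.mem_resHom_apply N h, map_mul, sigma_apply_inv_apply (σ := σ), map_mul, mul_assoc]

lemma invF_u_smul (h : resHomSubgroup S N) (g' : G) (n : N) :
    S.invF N h ((↑(S.u g') : A) • n) = (↑(S.u g') : A) * S.invF N h n := by
  rw [invF_apply, invF_apply, Finset.mul_sum]
  refine (Fintype.sum_equiv (Equiv.mulLeft g')
    (fun g => (↑(S.u g') : A) * (S.ι (σ g ((h : N →+ Λ) ((↑(S.u g⁻¹) : A) • n))) * (S.u g : A)))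
    (fun g => S.ι (σ g ((h : N →+ Λ) ((↑(S.u g⁻¹) : A) • ((↑(S.u g') : A) • n)))) * (S.u g : A))
    (fun g => ?_)).symm
  simp only [Equiv.coe_mulLeft]
  have h1 : (↑(S.u (g' * g)⁻¹) : A) • ((↑(S.u g') : A) • n) = (↑(S.u g⁻¹) : A) • n := by
    rw [← mul_smul, ← Units.val_mul, ← map_mul]
    congr 2
    group
  rw [h1, ← mul_assoc, S.skew_comm g', mul_assoc, ← Units.val_mul, ← map_mul]
  have h2 : σ g' (σ g ((h : N →+ Λ) ((↑(S.u g⁻¹) : A) • n)))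
      = σ (g' * g) ((h : N →+ Λ) ((↑(S.u g⁻¹) : A) • n)) := by
    rw [map_mul]; rfl
  rw [h2]

lemma invF_smul (h : resHomSubgroup S N) (a : A) (n : N) :
    S.invF N h (a • n) = a * S.invF N h n := by
  conv_lhs => rw [S.sum_coeff a]
  conv_rhs => rw [S.sum_coeff a]
  rw [Finset.sum_smul, map_sum, Finset.sum_mul]
  refine Finset.sum_congr rfl fun g _ => ?_
  rw [mul_smul, S.invF_ι_smul, S.invF_u_smul, mul_assoc]

/-- `invF` as an `A`-linear map. -/
noncomputable def invL (h : resHomSubgroup S N) : N →ₗ[A] A where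
  toFun := S.invF N h
  map_add' := map_add _
  map_smul' a n := S.invF_smul N h a n

/-- The forward map: compose with "coefficient at `1`". -/
noncomputable def fwd (f : N →ₗ[A] A) : resHomSubgroup S N :=
  ⟨{ toFun := fun n => S.coeff (f n) 1
     map_zero' := by show S.coeff (f 0) 1 = 0; rw [map_zero, S.coeff_zero]; rfl
     map_add' := fun n m => by
       show S.coeff (f (n + m)) 1 = S.coeff (f n) 1 + S.coeff (f m) 1
       rw [map_add, S.coeff_add]; rfl },
   fun r n => by
     have : f (S.ι r • n) = S.ι r * f n := by
       rw [map_smul, smul_eq_mul]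
     simp only [AddMonoidHom.coe_mk, ZeroHom.coe_mk, this, S.coeff_ι_mul]⟩

lemma fwd_apply (f : N →ₗ[A] A) (n : N) :
    ((S.fwd N f : N →+ Λ)) n = S.coeff (f n) 1 := rfl

lemma fwd_invL (h : resHomSubgroup S N) : S.fwd N (S.invL N h) = h := by
  ext n
  rw [fwd_apply]
  have h1 : S.coeff (S.invL N h n)
      = fun g => σ g ((h : N →+ Λ) ((↑(S.u g⁻¹) : A) • n)) :=
    S.coeff_unique (S.invF_apply N h n)
  rw [h1]
  simp only [inv_one, map_one, Units.val_one, one_smul]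
  rfl

lemma invL_fwd (f : N →ₗ[A] A) : S.invL N (S.fwd N f) = f := by
  ext n
  show S.invF N (S.fwd N f) n = f n
  rw [invF_apply]
  conv_rhs => rw [S.sum_coeff (f n)]
  refine Finset.sum_congr rfl fun g _ => ?_
  congr 1
  rw [fwd_apply]
  have h1 : f ((↑(S.u g⁻¹) : A) • n) = (↑(S.u g⁻¹) : A) * f n := by
    rw [map_smul, smul_eq_mul]
  rw [h1, S.coeff_u_mul]
  simp only [inv_inv, mul_one]
  exact congrArg (S.ι) (sigma_apply_inv_apply (σ := σ) g _)

end SkewGroupAlgebra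

/-- `Res_Λ(Hom_A(N, A)) ≅ Hom_Λ(Res_Λ N, Λ)` as right `Λ`-modules: there is an additive
isomorphism `Φ` which intertwines the right `Λ`-actions `(f·r)(n) = f(n)·(r*1)` and
`(h·r)(n) = h(n)·r` on the two Hom-spaces, naturally in `N`. -/
theorem res_homDual_iso_homDual_res
    (k Λ G A : Type u) [Field k] [Ring Λ] [Algebra k Λ] [FiniteDimensional k Λ]
    [Group G] [Fintype G] (σ : G →* (Λ ≃ₐ[k] Λ)) [Ring A] [Algebra k A]
    (S : SkewGroupAlgebra k Λ G σ A)
    (N : Type u) [AddCommGroup N] [Module A N] [Module k N] [IsScalarTower k A N]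
    [FiniteDimensional k N] :
    ∃ Φ : (N →ₗ[A] A) ≃+ resHomSubgroup S N,
      ∀ (f f' : N →ₗ[A] A) (r : Λ), (∀ n, f' n = f n * S.ι r) →
        ∀ n, (Φ f' : N →+ Λ) n = (Φ f : N →+ Λ) n * r := by
  refine ⟨{ toFun := S.fwd N
            invFun := S.invL N
            left_inv := S.invL_fwd N
            right_inv := S.fwd_invL N
            map_add' := fun f f' => by
              ext n
              show S.coeff ((f + f') n) 1 = S.coeff (f n) 1 + S.coeff (f' n) 1
              rw [LinearMap.add_apply, S.coeff_add]; rfl }, ?_⟩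
  intro f f' r hr n
  show S.coeff (f' n) 1 = S.coeff (f n) 1 * r
  rw [hr n, S.coeff_mul_ι]
  exact congrArg _ (SkewGroupAlgebra.sigma_one_apply (σ := σ) r)
end

section
/- Let Λ be a basic, elementary finite-dimensional algebra with complete set E of primitive orthogonal idempotents, and let a finite group G act on Λ preserving E. Let A = Λ*G. Then two idempotents e, e' ∈ E (viewed in A) are equivalent as idempotents of A (i.e., there exist a, b ∈ A with ea = ae' = a, e'b = be = b, ab = e, ba = e') if and only if e and e' lie in the same G-orbit. -/
/-! For a basic elementary algebra `Λ` with a `G`-action preserving the complete set `E`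
of primitive orthogonal idempotents, two idempotents `e, e' ∈ E` are equivalent in
`A = Λ * G` if and only if they lie in the same `G`-orbit. -/

universe u

/-- An idempotent lying in the Jacobson radical is zero. -/
lemma idem_of_mem_jacobson_bot {R : Type u} [Ring R] {e : R}
    (hidem : e * e = e) (hmem : e ∈ Ideal.jacobson (⊥ : Ideal R)) : e = 0 := by
  by_cases htop : Ideal.span ({1 - e} : Set R) = ⊤
  · have h1 : (1 : R) ∈ Ideal.span ({1 - e} : Set R) := htop ▸ Submodule.mem_top
    rw [Ideal.span, Submodule.mem_span_singleton] at h1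
    obtain ⟨y, hy⟩ := h1
    have : y * (1 - e) = 1 := hy
    calc e = (y * (1 - e)) * e := by rw [this, one_mul]
    _ = y * (e - e * e) := by rw [mul_assoc, sub_mul, one_mul]
    _ = 0 := by rw [hidem, sub_self, mul_zero]
  · obtain ⟨m, hm, hIm⟩ := Ideal.exists_le_maximal _ htop
    have hjm : Ideal.jacobson (⊥ : Ideal R) ≤ m := by
      rw [Ideal.jacobson]
      exact sInf_le ⟨bot_le, hm⟩
    have h1e : (1 - e) ∈ m := hIm (Ideal.subset_span rfl)
    have hem : e ∈ m := hjm hmem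
    have : (1 : R) ∈ m := by
      have := m.add_mem h1e hem
      simpa using this
    exact absurd ((Ideal.eq_top_iff_one m).mpr this) hm.ne_top

/-- Uniqueness of coefficients in the skew group algebra. -/
lemma SkewGroupAlgebra.repr_ext {k : Type u} [Field k] {Λ : Type u} [Ring Λ] [Algebra k Λ]
    {G : Type u} [Group G] [Fintype G] {σ : G →* (Λ ≃ₐ[k] Λ)}
    {A : Type u} [Ring A] [Algebra k A] (S : SkewGroupAlgebra k Λ G σ A)
    {a : A} {c c' : G → Λ}
    (h1 : a = ∑ g : G, S.ι (c g) * (S.u g : A))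
    (h2 : a = ∑ g : G, S.ι (c' g) * (S.u g : A)) : c = c' := by
  obtain ⟨c₀, -, hu⟩ := S.repr_unique a
  rw [hu c h1, hu c' h2]

/-- Let `Λ` be basic and elementary with complete set `E` of primitive orthogonal
idempotents, preserved by the `G`-action.  Then `e, e' ∈ E` (viewed in `A = Λ * G`) are
equivalent as idempotents of `A` iff they lie in the same `G`-orbit. -/
theorem idempotents_equivalent_iff_sameOrbit
    (k Λ G A : Type u) [Field k] [Ring Λ] [Algebra k Λ] [FiniteDimensional k Λ]
    [Group G] [Fintype G] (σ : G →* (Λ ≃ₐ[k] Λ)) [Ring A] [Algebra k A]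
    (S : SkewGroupAlgebra k Λ G σ A)
    (E : Finset Λ)
    -- complete set of primitive orthogonal idempotents
    (hidem : ∀ e ∈ E, IsIdempotentElem e)
    (horth : ∀ e ∈ E, ∀ e' ∈ E, e ≠ e' → e * e' = 0)
    (hsum : E.sum id = 1)
    (hprim : ∀ e ∈ E, e ≠ 0 ∧ ∀ f f' : Λ, IsIdempotentElem f → IsIdempotentElem f' →
      f * f' = 0 → f' * f = 0 → e = f + f' → f = 0 ∨ f' = 0)
    -- `Λ` is basic and elementary: `e (Λ/J) e' = 0` for `e ≠ e'` and `e (Λ/J) e ≅ k`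
    (hbasic : ∀ e ∈ E, ∀ e' ∈ E, e ≠ e' →
      ∀ x : Λ, e * x * e' ∈ Ideal.jacobson (⊥ : Ideal Λ))
    (helem : ∀ e ∈ E, ∀ x : Λ,
      ∃ c : k, e * x * e - c • e ∈ Ideal.jacobson (⊥ : Ideal Λ))
    -- the `G`-action preserves `E`
    (hE : ∀ (g : G), ∀ e ∈ E, σ g e ∈ E) :
    ∀ e ∈ E, ∀ e' ∈ E,
      ((∃ a b : A, S.ι e * a = a ∧ a * S.ι e' = a ∧ S.ι e' * b = b ∧ b * S.ι e = b ∧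
          a * b = S.ι e ∧ b * a = S.ι e') ↔ ∃ g : G, σ g e = e') := by
  intro e he e' he'
  classical
  have hee : e * e = e := hidem e he
  have he'e' : e' * e' = e' := hidem e' he'
  constructor
  · rintro ⟨a, b, hea, hae', he'b, hbe, hab, hba⟩
    by_contra hno
    push_neg at hno
    obtain ⟨c, hc, -⟩ := S.repr_unique a
    obtain ⟨d, hd, -⟩ := S.repr_unique b
    -- a = ι e * a * ι e'
    have ha' : a = ∑ g : G, S.ι (e * c g * σ g e') * (S.u g : A) := by
      conv_lhs => rw [← hae', ← hea, hc]
      rw [Finset.mul_sum, Finset.sum_mul]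
      refine Finset.sum_congr rfl fun g _ => ?_
      rw [mul_assoc (S.ι e), mul_assoc (S.ι (c g)), S.skew_comm, map_mul, map_mul,
        ← mul_assoc, ← mul_assoc]
    have hb' : b = ∑ g : G, S.ι (e' * d g * σ g e) * (S.u g : A) := by
      conv_lhs => rw [← hbe, ← he'b, hd]
      rw [Finset.mul_sum, Finset.sum_mul]
      refine Finset.sum_congr rfl fun g _ => ?_
      rw [mul_assoc (S.ι e'), mul_assoc (S.ι (d g)), S.skew_comm, map_mul, map_mul,
        ← mul_assoc, ← mul_assoc]
    have hcg : ∀ g : G, c g = e * c g * σ g e' :=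
      fun g => congrFun (S.repr_ext hc ha') g
    have hdg : ∀ g : G, d g = e' * d g * σ g e :=
      fun g => congrFun (S.repr_ext hd hb') g
    -- compute the product a * b
    have hstep : ∀ g h : G, (S.ι (c g) * (S.u g : A)) * (S.ι (d h) * (S.u h : A))
        = S.ι (c g * σ g (d h)) * (S.u (g * h) : A) := by
      intro g h
      rw [map_mul S.u, Units.val_mul, map_mul S.ι,
        mul_assoc (S.ι (c g)) ((S.u g : A)) (S.ι (d h) * (S.u h : A)),
        ← mul_assoc ((S.u g : A)) (S.ι (d h)) ((S.u h : A)), S.skew_comm]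
      simp only [mul_assoc]
    have hprod : S.ι e =
        ∑ f : G, S.ι (∑ g : G, c g * σ g (d (g⁻¹ * f))) * (S.u f : A) := by
      rw [← hab, hc, hd, Finset.sum_mul_sum]
      calc (∑ g : G, ∑ h : G, (S.ι (c g) * (S.u g : A)) * (S.ι (d h) * (S.u h : A)))
          = ∑ g : G, ∑ f : G, S.ι (c g * σ g (d (g⁻¹ * f))) * (S.u f : A) := by
            refine Finset.sum_congr rfl fun g _ => ?_
            refine Fintype.sum_equiv (Equiv.mulLeft g) _ _ fun h => ?_
            simp only [Equiv.coe_mulLeft]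
            rw [hstep, inv_mul_cancel_left]
        _ = _ := by
            rw [Finset.sum_comm]
            refine Finset.sum_congr rfl fun f _ => ?_
            rw [map_sum, Finset.sum_mul]
    have hie : S.ι e = ∑ f : G, S.ι (if f = 1 then e else 0) * (S.u f : A) := by
      rw [Fintype.sum_eq_single (1 : G) (fun f hf => by simp [hf])]
      simp
    have key : (∑ g : G, c g * σ g (d g⁻¹)) = e := by
      have := congrFun (S.repr_ext hprod hie) 1
      simpa using this
    have hJ : e ∈ Ideal.jacobson (⊥ : Ideal Λ) := by
      rw [← key]
      refine Submodule.sum_mem _ fun g _ => ?_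
      have hne : σ g e' ≠ e := by
        intro hgE
        exact hno g⁻¹ (by
          have : σ g⁻¹ (σ g e') = σ g⁻¹ e := by rw [hgE]
          rw [← AlgEquiv.mul_apply, ← map_mul, inv_mul_cancel, map_one,
            AlgEquiv.one_apply] at this
          exact this.symm)
      have hrw : σ g (d g⁻¹) = σ g e' * σ g (d g⁻¹) * e := by
        conv_lhs => rw [hdg g⁻¹]
        rw [map_mul, map_mul]
        congr 1
        rw [← AlgEquiv.mul_apply, ← map_mul, mul_inv_cancel, map_one, AlgEquiv.one_apply]
      rw [hrw, ← mul_assoc]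
      have := hbasic (σ g e') (hE g e' he') e he hne (σ g (d g⁻¹))
      have h2 : c g * (σ g e' * σ g (d g⁻¹) * e) ∈ Ideal.jacobson (⊥ : Ideal Λ) :=
        Ideal.mul_mem_left _ _ this
      rw [← mul_assoc] at h2
      exact h2
    exact absurd (idem_of_mem_jacobson_bot hee hJ) (hprim e he).1
  · rintro ⟨g, hg⟩
    refine ⟨S.ι e * (S.u g⁻¹ : A), S.ι e' * (S.u g : A), ?_, ?_, ?_, ?_, ?_, ?_⟩
    · rw [← mul_assoc, ← map_mul, hee]
    · rw [mul_assoc, S.skew_comm, ← mul_assoc, ← map_mul]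
      have : σ g⁻¹ e' = e := by
        rw [← hg, ← AlgEquiv.mul_apply, ← map_mul, inv_mul_cancel, map_one,
          AlgEquiv.one_apply]
      rw [this, hee]
    · rw [← mul_assoc, ← map_mul, he'e']
    · rw [mul_assoc, S.skew_comm, ← mul_assoc, ← map_mul, hg, he'e']
    · have hσ : σ g⁻¹ e' = e := by
        rw [← hg, ← AlgEquiv.mul_apply, ← map_mul, inv_mul_cancel, map_one,
          AlgEquiv.one_apply]
      rw [mul_assoc, ← mul_assoc (S.u g⁻¹ : A), S.skew_comm, mul_assoc,
        ← Units.val_mul, ← map_mul, inv_mul_cancel, map_one, Units.val_one, mul_one,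
        hσ, ← map_mul, hee]
    · rw [mul_assoc, ← mul_assoc (S.u g : A), S.skew_comm, mul_assoc,
        ← Units.val_mul, ← map_mul, mul_inv_cancel, map_one, Units.val_one, mul_one,
        hg, ← map_mul, he'e']
end

section
/- Let Λ be a finite-dimensional Frobenius algebra with Nakayama form ⟨−,+⟩ : Λ × Λ → k (nondegenerate, with ⟨rs,t⟩ = ⟨r,st⟩ = ⟨s, t·ν(r)⟩ for the Nakayama automorphism ν), and let a finite group G act on Λ preserving the Nakayama form (⟨g(r), g(s)⟩ = ⟨r,s⟩). Then ν commutes with the G-action (ν∘g = g∘ν for all g ∈ G), and the skew group algebra A = Λ*G is Frobenius with Nakayama form ⟨r*g, s*h⟩_A := δ_{g,h⁻¹}·⟨r, g(s)⟩ and Nakayama automorphism ν_A(r*g) = ν(r)*g. -/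
/-! If a finite group `G` acts on a Frobenius algebra `Λ` preserving the Nakayama form,
then the Nakayama automorphism commutes with the `G`-action and the skew group algebra
`A = Λ * G` is Frobenius with Nakayama form `⟨r*g, s*h⟩ = δ_{g,h⁻¹}·⟨r, g(s)⟩` and
Nakayama automorphism `ν_A(r*g) = ν(r)*g`. -/

universe u

set_option linter.unusedSectionVars false

namespace SGAux

variable {k Λ G A : Type u} [Field k] [Ring Λ] [Algebra k Λ]
  [Group G] [Fintype G] [DecidableEq G] {σ : G →* (Λ ≃ₐ[k] Λ)} [Ring A] [Algebra k A]
  (S : SkewGroupAlgebra k Λ G σ A)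

/-- The coordinate-assembly linear map. -/
def F : (G → Λ) →ₗ[k] A where
  toFun c := ∑ g, S.ι (c g) * (S.u g : A)
  map_add' c d := by simp [add_mul, Finset.sum_add_distrib]
  map_smul' t c := by simp [Finset.smul_sum, smul_mul_assoc]

lemma F_apply (c : G → Λ) : F S c = ∑ g, S.ι (c g) * (S.u g : A) := rfl

lemma F_bijective : Function.Bijective (F S) := by
  constructor
  · intro c d h
    obtain ⟨e, _, hu⟩ := S.repr_unique (F S c)
    exact (hu c rfl).trans (hu d h).symm
  · intro a
    obtain ⟨c, hc, -⟩ := S.repr_unique a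
    exact ⟨c, hc.symm⟩

/-- The coordinate linear equivalence. -/
noncomputable def E : (G → Λ) ≃ₗ[k] A := LinearEquiv.ofBijective (F S) (F_bijective S)

lemma E_apply (c : G → Λ) : E S c = ∑ g, S.ι (c g) * (S.u g : A) := rfl

lemma mul_gen (r s : Λ) (g h : G) :
    (S.ι r * S.u g) * (S.ι s * S.u h) = S.ι (r * σ g s) * (S.u (g * h) : A) := by
  rw [mul_assoc, ← mul_assoc (S.u g : A), S.skew_comm, map_mul, map_mul, Units.val_mul,
    mul_assoc, mul_assoc]

lemma E_single (r : Λ) (g : G) : E S (Pi.single g r) = S.ι r * S.u g := by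
  rw [E_apply, Finset.sum_eq_single g]
  · rw [Pi.single_eq_same]
  · intro h _ hh
    rw [Pi.single_eq_of_ne hh, map_zero, zero_mul]
  · intro h; exact absurd (Finset.mem_univ g) h

lemma E_symm_gen (r : Λ) (g : G) : (E S).symm (S.ι r * S.u g) = Pi.single g r := by
  rw [← E_single S r g, LinearEquiv.symm_apply_apply]

lemma gen_induction (P : A → Prop) (h0 : P 0) (hadd : ∀ x y, P x → P y → P (x + y))
    (hgen : ∀ (r : Λ) (g : G), P (S.ι r * S.u g)) (a : A) : P a := by
  obtain ⟨c, hc, -⟩ := S.repr_unique a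
  rw [hc]
  exact Finset.sum_induction _ P hadd h0 (fun g _ => hgen _ _)

lemma E_mul_gen (c : G → Λ) (s : Λ) (g : G) :
    E S c * (S.ι s * S.u g) = E S (fun h => c (h * g⁻¹) * σ (h * g⁻¹) s) := by
  rw [E_apply, E_apply, Finset.sum_mul]
  refine Fintype.sum_equiv (Equiv.mulRight g) _ _ (fun h => ?_)
  rw [mul_gen]
  simp

lemma gen_mul_E (r : Λ) (g : G) (c : G → Λ) :
    (S.ι r * S.u g) * E S c = E S (fun h => r * σ g (c (g⁻¹ * h))) := by
  rw [E_apply, E_apply, Finset.mul_sum]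
  refine Fintype.sum_equiv (Equiv.mulLeft g) _ _ (fun h => ?_)
  rw [mul_gen]
  simp

variable (B : Λ →ₗ[k] Λ →ₗ[k] k) (ν : Λ ≃ₐ[k] Λ)

/-- The Frobenius functional on `A`. -/
noncomputable def lam : A →ₗ[k] k where
  toFun a := B ((E S).symm a 1) 1
  map_add' a b := by simp
  map_smul' t a := by simp

lemma lam_apply (a : A) : lam S B a = B ((E S).symm a 1) 1 := rfl

lemma lam_E (c : G → Λ) : lam S B (E S c) = B (c 1) 1 := by
  rw [lam_apply, LinearEquiv.symm_apply_apply]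

lemma lam_gen (r : Λ) (g : G) :
    lam S B (S.ι r * S.u g) = if g = 1 then B r 1 else 0 := by
  rw [lam_apply, E_symm_gen, Pi.single_apply]
  by_cases h : g = 1 <;> simp [h, eq_comm]

/-- The Nakayama form on `A`. -/
noncomputable def BA : A →ₗ[k] A →ₗ[k] k :=
  LinearMap.mk₂ k (fun a b => lam S B (a * b))
    (fun a a' b => by simp [add_mul])
    (fun t a b => by simp [smul_mul_assoc])
    (fun a b b' => by simp [mul_add])
    (fun t a b => by simp [mul_smul_comm])

lemma BA_apply (a b : A) : BA S B a b = lam S B (a * b) := rfl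

lemma BA_gen (hass : ∀ r s t : Λ, B (r * s) t = B r (s * t)) (r s : Λ) (g h : G) :
    BA S B (S.ι r * S.u g) (S.ι s * S.u h) = if g = h⁻¹ then B r (σ g s) else 0 := by
  rw [BA_apply, mul_gen, lam_gen]
  rw [show (B (r * σ g s)) 1 = B r (σ g s) by rw [hass, mul_one]]
  exact if_congr (by constructor <;> intro e <;> simp [e, eq_inv_iff_mul_eq_one] at *) rfl rfl

/-- The linear part of the Nakayama automorphism of `A`. -/
noncomputable def nuL : A ≃ₗ[k] A :=
  (E S).symm.trans ((LinearEquiv.piCongrRight (fun _ : G => ν.toLinearEquiv)).trans (E S))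

lemma nuL_gen (r : Λ) (g : G) : nuL S ν (S.ι r * S.u g) = S.ι (ν r) * S.u g := by
  rw [nuL, LinearEquiv.trans_apply, LinearEquiv.trans_apply, E_symm_gen]
  rw [show (LinearEquiv.piCongrRight (fun _ : G => ν.toLinearEquiv)) (Pi.single g r)
      = Pi.single g (ν r) from funext fun h => by
    by_cases hh : h = g <;> simp [hh, Pi.single_apply]]
  exact E_single S _ _

end SGAux


/-- Let `Λ` be Frobenius with Nakayama form `B` and Nakayama automorphism `ν`, and let the
`G`-action preserve `B`.  Then `ν` commutes with the `G`-action, and `A = Λ * G` is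
Frobenius with the stated Nakayama form and Nakayama automorphism. -/
theorem skewGroupAlgebra_frobenius_of_invariant_form
    (k Λ G A : Type u) [Field k] [Ring Λ] [Algebra k Λ] [FiniteDimensional k Λ]
    [Group G] [Fintype G] [DecidableEq G] (σ : G →* (Λ ≃ₐ[k] Λ)) [Ring A] [Algebra k A]
    (S : SkewGroupAlgebra k Λ G σ A)
    (B : Λ →ₗ[k] Λ →ₗ[k] k) (ν : Λ ≃ₐ[k] Λ)
    -- `B` is nondegenerate
    (hB1 : ∀ r, (∀ s, B r s = 0) → r = 0) (hB2 : ∀ s, (∀ r, B r s = 0) → s = 0)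
    -- `B` is a Nakayama form with Nakayama automorphism `ν`
    (hass : ∀ r s t : Λ, B (r * s) t = B r (s * t))
    (hnak : ∀ r s t : Λ, B (r * s) t = B s (t * ν r))
    -- the `G`-action preserves the form
    (hG : ∀ (g : G) (r s : Λ), B (σ g r) (σ g s) = B r s) :
    (∀ (g : G) (r : Λ), ν (σ g r) = σ g (ν r)) ∧
    ∃ (νA : A ≃ₐ[k] A) (BA : A →ₗ[k] A →ₗ[k] k),
      (∀ (r : Λ) (g : G), νA (S.ι r * S.u g) = S.ι (ν r) * S.u g) ∧
      (∀ a, (∀ b, BA a b = 0) → a = 0) ∧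
      (∀ b, (∀ a, BA a b = 0) → b = 0) ∧
      (∀ a b c : A, BA (a * b) c = BA a (b * c)) ∧
      (∀ a b c : A, BA (a * b) c = BA b (c * νA a)) ∧
      (∀ (r s : Λ) (g h : G), BA (S.ι r * S.u g) (S.ι s * S.u h) =
        if g = h⁻¹ then B r (σ g s) else 0) := by
  classical
  have hσmul : ∀ (a b : G) (x : Λ), σ a (σ b x) = σ (a * b) x := by
    intro a b x; rw [map_mul]; rfl
  -- Part 1 : ν commutes with the G-action
  have hcomm : ∀ (g : G) (r : Λ), ν (σ g r) = σ g (ν r) := by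
    intro g r
    have key : ∀ s : Λ, B s (ν (σ g r)) = B s (σ g (ν r)) := by
      intro s
      obtain ⟨s', rfl⟩ : ∃ s', σ g s' = s := ⟨(σ g).symm s, (σ g).apply_symm_apply s⟩
      have h1 : B (σ g r * σ g s') 1 = B (σ g s') (1 * ν (σ g r)) := hnak _ _ 1
      rw [one_mul] at h1
      rw [← h1, ← map_mul, ← map_one (σ g), hG, hnak r s' 1, one_mul, hG]
    have hsub : ∀ s : Λ, B s (ν (σ g r) - σ g (ν r)) = 0 := by
      intro s; rw [map_sub, key, sub_self]
    have := hB2 _ hsub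
    exact sub_eq_zero.mp this
  refine ⟨hcomm, ?_⟩
  -- the Nakayama automorphism of A
  have h1 : SGAux.nuL S ν (1 : A) = 1 := by
    have e1 : (1 : A) = S.ι 1 * S.u 1 := by simp
    rw [e1, SGAux.nuL_gen]; simp
  have hmul : ∀ a b : A, SGAux.nuL S ν (a * b) = SGAux.nuL S ν a * SGAux.nuL S ν b := by
    intro a
    refine SGAux.gen_induction S
      (fun a => ∀ b, SGAux.nuL S ν (a * b) = SGAux.nuL S ν a * SGAux.nuL S ν b)
      ?_ ?_ ?_ a
    · intro b; simp
    · intro x y hx hy b; simp [add_mul, hx, hy]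
    · intro r g b
      refine SGAux.gen_induction S
        (fun b => SGAux.nuL S ν ((S.ι r * S.u g) * b)
          = SGAux.nuL S ν (S.ι r * S.u g) * SGAux.nuL S ν b) ?_ ?_ ?_ b
      · simp
      · intro x y hx hy; simp [mul_add, hx, hy]
      · intro s h
        rw [SGAux.mul_gen, SGAux.nuL_gen, SGAux.nuL_gen, SGAux.nuL_gen, SGAux.mul_gen,
          map_mul, hcomm]
  refine ⟨AlgEquiv.ofLinearEquiv (SGAux.nuL S ν) h1 hmul, SGAux.BA S B, ?_, ?_, ?_, ?_, ?_, ?_⟩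
  · intro r g
    rw [AlgEquiv.ofLinearEquiv_apply, SGAux.nuL_gen]
  · -- nondegeneracy 1
    intro a ha
    have hac : a = SGAux.E S ((SGAux.E S).symm a) := ((SGAux.E S).apply_symm_apply a).symm
    set c := (SGAux.E S).symm a with hc
    have hcg : ∀ g, c g = 0 := by
      intro g
      apply hB1
      intro t
      obtain ⟨s, rfl⟩ : ∃ s, σ g s = t := ⟨(σ g).symm t, (σ g).apply_symm_apply t⟩
      have h0 := ha (S.ι s * S.u g⁻¹)
      rw [SGAux.BA_apply, hac, SGAux.E_mul_gen, SGAux.lam_E] at h0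
      simp only [one_mul, inv_inv] at h0
      rw [hass, mul_one] at h0
      exact h0
    rw [hac, show c = 0 from funext hcg, map_zero]
  · -- nondegeneracy 2
    intro b hb
    have hbc : b = SGAux.E S ((SGAux.E S).symm b) := ((SGAux.E S).apply_symm_apply b).symm
    set c := (SGAux.E S).symm b with hc
    have hcg : ∀ g, c g = 0 := by
      intro g
      have hz : σ g⁻¹ (c g) = 0 := by
        apply hB2
        intro r
        have h0 := hb (S.ι r * S.u g⁻¹)
        rw [SGAux.BA_apply, hbc, SGAux.gen_mul_E, SGAux.lam_E] at h0
        simp only [inv_inv, mul_one] at h0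
        rw [hass, mul_one] at h0
        exact h0
      have h2 := congrArg (σ g⁻¹).symm hz
      simpa using h2
    rw [hbc, show c = 0 from funext hcg, map_zero]
  · -- associativity
    intro a b c
    rw [SGAux.BA_apply, SGAux.BA_apply, mul_assoc]
  · -- Nakayama property
    intro a
    refine SGAux.gen_induction S
      (fun a => ∀ b c, SGAux.BA S B (a * b) c
        = SGAux.BA S B b (c * (AlgEquiv.ofLinearEquiv (SGAux.nuL S ν) h1 hmul) a)) ?_ ?_ ?_ a
    · intro b c; simp
    · intro x y hx hy b c
      simp only [add_mul, map_add, AlgEquiv.ofLinearEquiv_apply, LinearMap.add_apply] at *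
      simp only [mul_add, map_add, LinearMap.add_apply, hx, hy]
    · intro r g b
      refine SGAux.gen_induction S (fun b => ∀ c, SGAux.BA S B ((S.ι r * S.u g) * b) c
        = SGAux.BA S B b (c * (AlgEquiv.ofLinearEquiv (SGAux.nuL S ν) h1 hmul)
            (S.ι r * S.u g))) ?_ ?_ ?_ b
      · intro c; simp
      · intro x y hx hy c
        simp only [mul_add, map_add, LinearMap.add_apply, hx, hy]
      · intro s h c
        refine SGAux.gen_induction S (fun c => SGAux.BA S B ((S.ι r * S.u g) * (S.ι s * S.u h)) c
          = SGAux.BA S B (S.ι s * S.u h) (c * (AlgEquiv.ofLinearEquiv (SGAux.nuL S ν) h1 hmul)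
              (S.ι r * S.u g))) ?_ ?_ ?_ c
        · simp
        · intro x y hx hy
          simp only [map_add, LinearMap.add_apply, add_mul, hx, hy]
        · intro t l
          rw [AlgEquiv.ofLinearEquiv_apply, SGAux.nuL_gen, SGAux.mul_gen, SGAux.mul_gen,
            SGAux.BA_gen S B hass, SGAux.BA_gen S B hass]
          have hiff : g * h = l⁻¹ ↔ h = (l * g)⁻¹ := by
            rw [mul_inv_rev]
            constructor
            · intro e; rw [← e, inv_mul_cancel_left]
            · intro e; rw [e, mul_inv_cancel_left]
          by_cases hcase : h = (l * g)⁻¹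
          · rw [if_pos (hiff.mpr hcase), if_pos hcase]
            subst hcase
            have e1 : g * (l * g)⁻¹ = l⁻¹ := by rw [mul_inv_rev, mul_inv_cancel_left]
            have e2 : (σ ((l * g)⁻¹)) (t * σ l (ν r)) = σ g⁻¹ ((σ l⁻¹) t * ν r) := by
              rw [map_mul, map_mul, hσmul, hσmul, mul_inv_rev, inv_mul_cancel_right]
            rw [e1, e2, hnak]
            have e3 : B s (σ g⁻¹ (σ l⁻¹ t * ν r))
                = B (σ g s) (σ g (σ g⁻¹ (σ l⁻¹ t * ν r))) := (hG g s _).symm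
            rw [e3, hσmul, mul_inv_cancel, map_one, AlgEquiv.one_apply]
          · have hc2 : ¬(g * h = l⁻¹) := fun e => hcase (hiff.mp e)
            rw [if_neg hc2, if_neg hcase]
  · -- the explicit formula
    intro r s g h
    exact SGAux.BA_gen S B hass r s g h
end

section
/- Let Λ be a finite-dimensional Frobenius algebra with Nakayama automorphism ν of finite order N in Aut(Λ), whose Nakayama form is preserved by the action of the cyclic group ⟨ν⟩ ≅ Z/NZ on Λ. Then the skew group algebra A = Λ * ⟨ν⟩ is a symmetric algebra: its Nakayama automorphism ν_A(r * ν^m) = ν(r) * ν^m is the inner automorphism given by conjugation by the unit ε = 1_Λ * ν of A. -/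
/-! If `Λ` is Frobenius with Nakayama automorphism `ν` of finite order and the cyclic
group `⟨ν⟩` acts on `Λ` (preserving the Nakayama form), then the skew group algebra
`A = Λ * ⟨ν⟩` is symmetric: its Nakayama automorphism `ν_A(r * ν^m) = ν(r) * ν^m` is
the inner automorphism given by conjugation by the unit `ε = 1_Λ * ν`. -/

universe u

/-- Conjugation by a unit as an algebra automorphism. -/
def conjUnitAlgEquiv (k : Type u) {A : Type u} [CommSemiring k] [Ring A] [Algebra k A]
    (ε : Aˣ) : A ≃ₐ[k] A where
  toFun a := ε * a * (↑ε⁻¹ : A)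
  invFun a := (↑ε⁻¹ : A) * a * ε
  left_inv a := by
    simp [mul_assoc]
  right_inv a := by
    simp [mul_assoc]
  map_mul' a b := by
    simp [mul_assoc]
  map_add' a b := by
    simp [mul_add, add_mul]
  commutes' r := by
    show (ε : A) * algebraMap k A r * (↑ε⁻¹ : A) = algebraMap k A r
    rw [← Algebra.commutes r (ε : A)]
    simp [mul_assoc]

/-- Let `Λ` be Frobenius with Nakayama form `B` and Nakayama automorphism `ν` of finite
order `n`, and let `G = ⟨ν⟩` be the cyclic group generated by `ν` (i.e. `G` is generated
by an element `g₀` with `σ g₀ = ν`), acting on `Λ` and preserving the Nakayama form.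
Then `A = Λ * ⟨ν⟩` is a symmetric algebra: there is a Nakayama structure `(νA, BA)` on `A`
with `νA(r * ν^m) = ν(r) * ν^m`, and `νA` is the inner automorphism `a ↦ ε a ε⁻¹` for the
unit `ε = 1_Λ * ν = u g₀` of `A`. -/
theorem nakayamaTwist_symmetric
    (k Λ G A : Type u) [Field k] [Ring Λ] [Algebra k Λ] [FiniteDimensional k Λ]
    [Group G] [Fintype G] [DecidableEq G] (σ : G →* (Λ ≃ₐ[k] Λ)) [Ring A] [Algebra k A]
    (S : SkewGroupAlgebra k Λ G σ A)
    (B : Λ →ₗ[k] Λ →ₗ[k] k) (ν : Λ ≃ₐ[k] Λ)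
    (n : ℕ) (hn : 0 < n) (horder : orderOf ν = n)
    (g₀ : G) (hgen : Subgroup.zpowers g₀ = ⊤) (hg₀ : σ g₀ = ν)
    (hB1 : ∀ r, (∀ s, B r s = 0) → r = 0) (hB2 : ∀ s, (∀ r, B r s = 0) → s = 0)
    (hass : ∀ r s t : Λ, B (r * s) t = B r (s * t))
    (hnak : ∀ r s t : Λ, B (r * s) t = B s (t * ν r))
    (hG : ∀ (g : G) (r s : Λ), B (σ g r) (σ g s) = B r s) :
    ∃ (νA : A ≃ₐ[k] A) (BA : A →ₗ[k] A →ₗ[k] k),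
      (∀ (r : Λ) (g : G), νA (S.ι r * S.u g) = S.ι (ν r) * S.u g) ∧
      (∀ a, (∀ b, BA a b = 0) → a = 0) ∧
      (∀ b, (∀ a, BA a b = 0) → b = 0) ∧
      (∀ a b c : A, BA (a * b) c = BA a (b * c)) ∧
      (∀ a b c : A, BA (a * b) c = BA b (c * νA a)) ∧
      -- `ν_A` is inner: conjugation by `ε = 1_Λ * ν`
      (∀ a : A, νA a = (S.u g₀ : A) * a * (↑(S.u g₀)⁻¹ : A)) := by
  classical
  -- coefficient function
  set c : A → G → Λ := fun a => (S.repr_unique a).choose with hc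
  have hrepr : ∀ a : A, a = ∑ g : G, S.ι (c a g) * (S.u g : A) :=
    fun a => (S.repr_unique a).choose_spec.1
  have huniq : ∀ (a : A) (d : G → Λ), a = ∑ g : G, S.ι (d g) * (S.u g : A) → d = c a :=
    fun a d hd => (S.repr_unique a).choose_spec.2 d hd
  -- coefficients of a generator
  have hcgen : ∀ (r : Λ) (g : G),
      c (S.ι r * (S.u g : A)) = fun h => if h = g then r else 0 := by
    intro r g
    refine (huniq _ _ ?_).symm
    rw [Finset.sum_eq_single g]
    · simp
    · intro h _ hh
      simp [hh]
    · simp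
  -- additivity and homogeneity of c
  have hcadd : ∀ a b : A, c (a + b) = fun g => c a g + c b g := by
    intro a b
    refine (huniq _ _ ?_).symm
    simp only [map_add, add_mul, Finset.sum_add_distrib]
    rw [← hrepr a, ← hrepr b]
  have hcsmul : ∀ (x : k) (a : A), c (x • a) = fun g => x • c a g := by
    intro x a
    refine (huniq _ _ ?_).symm
    simp only [map_smul, smul_mul_assoc, ← Finset.smul_sum]
    rw [← hrepr a]
  -- the Frobenius functional on A
  set T : A →ₗ[k] k :=
    { toFun := fun a => B (c a 1) 1
      map_add' := by
        intro a b
        show B (c (a + b) 1) 1 = B (c a 1) 1 + B (c b 1) 1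
        rw [hcadd]
        simp
      map_smul' := by
        intro x a
        show B (c (x • a) 1) 1 = x • B (c a 1) 1
        rw [hcsmul]
        simp } with hT
  have hTapp : ∀ a : A, T a = B (c a 1) 1 := fun a => rfl
  have hTgen : ∀ (r : Λ) (g : G),
      T (S.ι r * (S.u g : A)) = if (1 : G) = g then B r 1 else 0 := by
    intro r g
    rw [hTapp, hcgen]
    by_cases h : (1 : G) = g <;> simp [h]
  -- product of generators
  have hmulgen : ∀ (r : Λ) (g : G) (s : Λ) (h : G),
      (S.ι r * (S.u g : A)) * (S.ι s * (S.u h : A))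
        = S.ι (r * σ g s) * (S.u (g * h) : A) := by
    intro r g s h
    have h1 : (S.ι r * (S.u g : A)) * (S.ι s * (S.u h : A))
        = S.ι r * ((S.u g : A) * S.ι s) * (S.u h : A) := by
      simp only [mul_assoc]
    rw [h1, S.skew_comm, map_mul S.u, Units.val_mul, map_mul S.ι]
    simp only [mul_assoc]
  have hTprod : ∀ (r : Λ) (g : G) (s : Λ) (h : G),
      T ((S.ι r * (S.u g : A)) * (S.ι s * (S.u h : A)))
        = if g * h = 1 then B r (σ g s) else 0 := by
    intro r g s h
    rw [hmulgen, hTgen]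
    by_cases hc1 : g * h = 1
    · rw [if_pos hc1.symm, if_pos hc1, hass, mul_one]
    · rw [if_neg (fun hx => hc1 hx.symm), if_neg hc1]
  -- the automorphism νA : conjugation by u g₀
  have hcomm : ∀ g : G, g₀ * g = g * g₀ := by
    intro g
    have hmem : g ∈ Subgroup.zpowers g₀ := by rw [hgen]; trivial
    obtain ⟨m, rfl⟩ := hmem
    exact (Commute.refl g₀).zpow_right m
  set νA : A ≃ₐ[k] A := conjUnitAlgEquiv k (S.u g₀) with hνA
  have hνAapp : ∀ a : A, νA a = (S.u g₀ : A) * a * (↑(S.u g₀)⁻¹ : A) := fun a => rfl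
  have hνAgen : ∀ (r : Λ) (g : G), νA (S.ι r * (S.u g : A)) = S.ι (ν r) * (S.u g : A) := by
    intro r g
    rw [hνAapp]
    have h2 : (S.u g₀ : A) * ((S.u g : A) * (↑(S.u g₀)⁻¹ : A)) = (S.u g : A) := by
      have h3 : S.u g₀ * (S.u g * (S.u g₀)⁻¹) = S.u g := by
        rw [← map_inv, ← map_mul, ← map_mul]
        congr 1
        rw [← mul_assoc, hcomm, mul_assoc, mul_inv_cancel, mul_one]
      calc (S.u g₀ : A) * ((S.u g : A) * (↑(S.u g₀)⁻¹ : A))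
          = ((S.u g₀ * (S.u g * (S.u g₀)⁻¹) : Aˣ) : A) := by
            rw [Units.val_mul, Units.val_mul]
        _ = (S.u g : A) := by rw [h3]
    have h1 : (S.u g₀ : A) * (S.ι r * (S.u g : A)) * (↑(S.u g₀)⁻¹ : A)
        = ((S.u g₀ : A) * S.ι r) * ((S.u g : A) * (↑(S.u g₀)⁻¹ : A)) := by
      simp only [mul_assoc]
    rw [h1, S.skew_comm, hg₀, mul_assoc, h2]
  -- the bilinear form
  set BA : A →ₗ[k] A →ₗ[k] k := (LinearMap.mul k A).compr₂ T with hBA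
  have hBAapp : ∀ a b : A, BA a b = T (a * b) := fun a b => rfl
  -- key per-term twisted-trace identity
  have hPT : ∀ (r : Λ) (g : G) (s : Λ) (h : G),
      T ((S.ι r * (S.u g : A)) * (S.ι s * (S.u h : A)))
        = T ((S.ι s * (S.u h : A)) * (S.ι (ν r) * (S.u g : A))) := by
    intro r g s h
    rw [hTprod, hTprod]
    by_cases hgh : g * h = 1
    · have hh : h = g⁻¹ := (mul_eq_one_iff_inv_eq.mp hgh).symm
      have hhg : h * g = 1 := by rw [hh]; exact inv_mul_cancel g
      rw [if_pos hgh, if_pos hhg, hh]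
      -- B r (σ g s) = B s (σ g⁻¹ (ν r))
      have e1 : B r (σ g s) = B (r * σ g s) 1 := by rw [hass, mul_one]
      have e2 : B (r * σ g s) 1 = B (σ g s) (ν r) := by rw [hnak, one_mul]
      have e3 : B s (σ g⁻¹ (ν r)) = B (σ g s) (σ g (σ g⁻¹ (ν r))) := (hG g s _).symm
      have e4 : σ g (σ g⁻¹ (ν r)) = ν r := by
        have h5 : σ g * σ g⁻¹ = 1 := by rw [← map_mul, mul_inv_cancel, map_one]
        have h6 : (σ g * σ g⁻¹) (ν r) = σ g (σ g⁻¹ (ν r)) := rfl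
        rw [← h6, h5]
        rfl
      rw [e1, e2, e3, e4]
    · have hhg : ¬ h * g = 1 := by
        intro hx
        apply hgh
        have hh : h = g⁻¹ := mul_eq_one_iff_eq_inv.mp hx
        subst hh
        exact mul_inv_cancel g
      rw [if_neg hgh, if_neg hhg]
  -- the twisted-trace identity in general
  have hTW : ∀ a b : A, T (a * b) = T (b * νA a) := by
    intro a b
    have hνa : νA a = ∑ g : G, S.ι (ν (c a g)) * (S.u g : A) := by
      conv_lhs => rw [hrepr a]
      rw [map_sum]
      exact Finset.sum_congr rfl fun g _ => hνAgen _ _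
    conv_lhs => rw [hrepr a, hrepr b]
    conv_rhs => rw [hrepr b, hνa]
    rw [Finset.sum_mul_sum, Finset.sum_mul_sum]
    simp only [map_sum]
    rw [Finset.sum_comm]
    exact Finset.sum_congr rfl fun h _ => Finset.sum_congr rfl fun g _ => hPT _ _ _ _
  -- nondegeneracy (left)
  have hnd1 : ∀ a : A, (∀ b : A, BA a b = 0) → a = 0 := by
    intro a ha
    have hzero : ∀ g : G, c a g = 0 := by
      intro g
      apply hB1
      intro s'
      obtain ⟨s, rfl⟩ := (σ g).surjective s'
      have hthis := ha (S.ι s * (S.u g⁻¹ : A))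
      rw [hBAapp] at hthis
      conv_lhs at hthis => rw [hrepr a, Finset.sum_mul]
      rw [map_sum] at hthis
      rw [Finset.sum_congr rfl (fun x _ => hTprod (c a x) x s g⁻¹)] at hthis
      simp only [mul_inv_eq_one] at hthis
      rw [Finset.sum_ite_eq' Finset.univ g (fun x => B (c a x) (σ x s))] at hthis
      simpa using hthis
    rw [hrepr a]
    simp [hzero]
  -- nondegeneracy (right)
  have hnd2 : ∀ b : A, (∀ a : A, BA a b = 0) → b = 0 := by
    intro b hb
    have hzero : ∀ g : G, c b g = 0 := by
      intro g
      have h0 : σ g⁻¹ (c b g) = 0 := by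
        apply hB2
        intro r
        have hthis := hb (S.ι r * (S.u g⁻¹ : A))
        rw [hBAapp] at hthis
        conv_lhs at hthis => rw [hrepr b, Finset.mul_sum]
        rw [map_sum] at hthis
        rw [Finset.sum_congr rfl (fun x _ => hTprod r g⁻¹ (c b x) x)] at hthis
        simp only [inv_mul_eq_one] at hthis
        rw [Finset.sum_ite_eq Finset.univ g (fun x => B r (σ g⁻¹ (c b x)))] at hthis
        simpa using hthis
      exact (σ g⁻¹).injective (h0.trans (map_zero (σ g⁻¹)).symm)
    rw [hrepr b]
    simp [hzero]
  refine ⟨νA, BA, fun r g => hνAgen r g, hnd1, hnd2, ?_, ?_, hνAapp⟩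
  · intro a b x
    rw [hBAapp, hBAapp, mul_assoc]
  · intro a b x
    rw [hBAapp, hBAapp, mul_assoc, hTW a (b * x), mul_assoc]
end

section
/- Let G be a finite group acting on a finite-dimensional algebra Λ, let A = Λ*G, and let f : P → P' be a homomorphism of finitely generated projective Λ-modules lying in rad(P, P'). Then A ⊗_Λ f : A ⊗_Λ P → A ⊗_Λ P' lies in rad(A ⊗_Λ P, A ⊗_Λ P') as a map of projective A-modules. -/
/-! Induction along `Λ ⊆ A = Λ * G` preserves radical morphisms between finitely
generated projective modules. -/

universe u

/-- `I` is (a realization of) the induced `A`-module `A ⊗_Λ M` of a `Λ`-module `M`. -/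
structure IsInducedModule {k Λ G A : Type u} [Field k] [Ring Λ] [Algebra k Λ]
    [Group G] [Fintype G] {σ : G →* (Λ ≃ₐ[k] Λ)} [Ring A] [Algebra k A]
    (S : SkewGroupAlgebra k Λ G σ A)
    (M : Type u) [AddCommGroup M] [Module Λ M]
    (I : Type u) [AddCommGroup I] [Module A I] : Type u where
  unit : M →+ I
  unit_smul : ∀ (r : Λ) (m : M), unit (r • m) = S.ι r • unit m
  universal : ∀ (P : Type u) [AddCommGroup P] [Module A P] (f : M →+ P),
    (∀ (r : Λ) (m : M), f (r • m) = S.ι r • f m) →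
    ∃! F : I →ₗ[A] P, ∀ m, F (unit m) = f m

lemma aux_fitting_nilpotent {Λ : Type u} [Ring Λ] {L : Type u} [AddCommGroup L] [Module Λ L]
    [IsNoetherian Λ L] [IsArtinian Λ L] (hind : IsIndecomp Λ L) (e : L →ₗ[Λ] L)
    (he : ¬ Function.Bijective e) : IsNilpotent e := by
  obtain ⟨n, hn1, hcompl⟩ :
      ∃ n : ℕ, 1 ≤ n ∧ IsCompl (LinearMap.ker (e ^ n)) (LinearMap.range (e ^ n)) := by
    have h := (Filter.eventually_ge_atTop 1).and (e.eventually_isCompl_ker_pow_range_pow)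
    obtain ⟨n, hn⟩ := h.exists
    exact ⟨n, hn.1, hn.2⟩
  set q : Submodule Λ L := LinearMap.range (e ^ n) with hq
  set pr : L →ₗ[Λ] q := q.projectionOnto _ hcompl.symm with hpr
  set π : L →ₗ[Λ] L := q.subtype ∘ₗ pr with hπ
  have hπ_left : ∀ x : L, x ∈ q → π x = x := by
    intro x hx
    have := Submodule.projectionOnto_apply_left hcompl.symm ⟨x, hx⟩
    simpa [hπ, hpr] using congrArg Subtype.val this
  have hidem : π ∘ₗ π = π := by
    apply LinearMap.ext; intro x
    have hmem : π x ∈ q := (pr x).2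
    simpa using hπ_left (π x) hmem
  rcases hind.2 π hidem with h0 | hid
  · -- range (e^n) = ⊥, so e^n = 0
    refine ⟨n, ?_⟩
    apply LinearMap.ext; intro x
    have hmem : (e ^ n) x ∈ q := LinearMap.mem_range_self _ x
    have := hπ_left ((e ^ n) x) hmem
    rw [h0] at this
    simpa using this.symm
  · -- e is bijective, contradiction
    exfalso; apply he
    have hsurj : Function.Surjective (e ^ n) := by
      intro x
      have : π x = x := by rw [hid]; rfl
      have hmem : x ∈ q := by rw [← this]; exact (pr x).2
      exact hmem
    have hinj : Function.Injective (e ^ n) := by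
      rw [← LinearMap.ker_eq_bot]
      rw [eq_bot_iff]
      intro x hx
      have hx' : x ∈ LinearMap.ker (e ^ n) := hx
      have h0' : pr x = 0 := Submodule.projectionOnto_apply_right hcompl.symm ⟨x, hx'⟩
      have : π x = 0 := by simp [hπ, h0']
      rw [hid] at this
      simpa using this
    obtain ⟨m, rfl⟩ : ∃ m, n = m + 1 := ⟨n - 1, (Nat.succ_pred_eq_of_pos hn1).symm⟩
    constructor
    · intro a b hab
      apply hinj
      rw [pow_succ]
      simp only [Module.End.mul_apply, hab]
    · intro y
      obtain ⟨x, hx⟩ := hsurj y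
      refine ⟨(e ^ m) x, ?_⟩
      rw [pow_succ'] at hx
      simpa [Module.End.mul_apply] using hx

lemma aux_isunit_iff {Λ : Type u} [Ring Λ] {L : Type u} [AddCommGroup L] [Module Λ L]
    (e : L →ₗ[Λ] L) : IsUnit e ↔ Function.Bijective e := Module.End.isUnit_iff e

lemma aux_sum_not_bijective {Λ : Type u} [Ring Λ] {L : Type u} [AddCommGroup L] [Module Λ L]
    [IsNoetherian Λ L] [IsArtinian Λ L] (hind : IsIndecomp Λ L)
    {ι : Type u} (s : Finset ι) (E : ι → (L →ₗ[Λ] L))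
    (h : ∀ i ∈ s, ¬ Function.Bijective (E i)) :
    ¬ Function.Bijective ⇑(∑ i ∈ s, E i) := by
  classical
  induction s using Finset.induction_on with
  | empty =>
    simp only [Finset.sum_empty]
    intro hbij
    obtain ⟨x, y, hxy⟩ := hind.1
    exact hxy (hbij.1 (by simp : (0 : L →ₗ[Λ] L) x = (0 : L →ₗ[Λ] L) y))
  | @insert a s' ha IH =>
    intro hbij
    rw [Finset.sum_insert ha] at hbij
    set W : L →ₗ[Λ] L := ∑ i ∈ s', E i with hW
    have hV : IsUnit (E a + W) := (Module.End.isUnit_iff _).mpr hbij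
    obtain ⟨V, hVval⟩ := hV
    set x : L →ₗ[Λ] L := (↑V⁻¹ : L →ₗ[Λ] L) * E a with hx
    have hxnotbij : ¬ Function.Bijective x := by
      intro hxb
      have : IsUnit x := (Module.End.isUnit_iff _).mpr hxb
      have : IsUnit (E a) := by
        have : (V : L →ₗ[Λ] L) * x = E a := by
          rw [hx, ← mul_assoc, V.mul_inv, one_mul]
        rw [← this]
        exact (V.isUnit).mul ‹IsUnit x›
      exact h a (Finset.mem_insert_self a s') ((Module.End.isUnit_iff _).mp this)
    have hnil : IsNilpotent x := aux_fitting_nilpotent hind x hxnotbij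
    have hunit : IsUnit (1 - x) := hnil.isUnit_one_sub
    have hWeq : W = (V : L →ₗ[Λ] L) * (1 - x) := by
      rw [mul_sub, mul_one, hx, ← mul_assoc, V.mul_inv, one_mul, hVval]
      abel
    have : IsUnit W := by rw [hWeq]; exact V.isUnit.mul hunit
    exact IH (fun i hi => h i (Finset.mem_insert_of_mem hi)) ((Module.End.isUnit_iff _).mp this)

lemma IsIndecomp.of_equiv {Λ : Type u} [Ring Λ] {L M : Type u}
    [AddCommGroup L] [Module Λ L] [AddCommGroup M] [Module Λ M]
    (eq : L ≃ₗ[Λ] M) (h : IsIndecomp Λ L) : IsIndecomp Λ M := by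
  obtain ⟨hnt, hid⟩ := h
  constructor
  · haveI := hnt
    exact eq.symm.toEquiv.nontrivial
  · intro g hg
    set g' : L →ₗ[Λ] L := eq.symm.toLinearMap ∘ₗ g ∘ₗ eq.toLinearMap with hg'
    have hg'idem : g' ∘ₗ g' = g' := by
      apply LinearMap.ext; intro x
      have h1 : g (g (eq x)) = g (eq x) := by simpa using LinearMap.ext_iff.mp hg (eq x)
      simp [hg', LinearEquiv.apply_symm_apply, h1]
    rcases hid g' hg'idem with h0 | hId
    · left
      apply LinearMap.ext; intro y
      have := LinearMap.ext_iff.mp h0 (eq.symm y)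
      simp only [hg', LinearMap.coe_comp, Function.comp_apply, LinearEquiv.coe_coe,
        LinearEquiv.apply_symm_apply, LinearMap.zero_apply] at this ⊢
      have := congrArg eq this
      simpa using this
    · right
      apply LinearMap.ext; intro y
      have := LinearMap.ext_iff.mp hId (eq.symm y)
      simp only [hg', LinearMap.coe_comp, Function.comp_apply, LinearEquiv.coe_coe,
        LinearMap.id_coe, id_eq] at this ⊢
      have := congrArg eq this
      simpa using this

lemma aux_exists_indec_summand (k Λ : Type u) [Field k] [Ring Λ] [Algebra k Λ] :
    ∀ (n : ℕ) (L : Type u) [AddCommGroup L] [Module Λ L] [Module k L] [IsScalarTower k Λ L]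
      [FiniteDimensional k L], Module.finrank k L = n → Nontrivial L →
      ∃ (N : Submodule Λ L) (π : L →ₗ[Λ] N), (∀ y : N, π ↑y = y) ∧ IsIndecomp Λ N := by
  intro n
  induction n using Nat.strong_induction_on with
  | _ n IH =>
    intro L _ _ _ _ _ hrank hnt
    by_cases hdec : IsIndecomp Λ L
    · refine ⟨⊤, Submodule.topEquiv.symm.toLinearMap, fun y => ?_, ?_⟩
      · apply Subtype.ext; rfl
      · exact IsIndecomp.of_equiv Submodule.topEquiv.symm hdec
    · rw [IsIndecomp, not_and] at hdec
      have := hdec hnt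
      push_neg at this
      obtain ⟨e, heidem, he0, he1⟩ := this
      set N₁ : Submodule Λ L := LinearMap.range e with hN₁
      have heid : ∀ x : L, x ∈ N₁ → e x = x := by
        intro x hx
        obtain ⟨z, rfl⟩ := hx
        have := LinearMap.ext_iff.mp heidem z
        simpa using this
      haveI hnt1 : Nontrivial N₁ := by
        have : ∃ z : L, e z ≠ 0 := by
          by_contra hc; push_neg at hc
          exact he0 (LinearMap.ext fun z => by simpa using hc z)
        obtain ⟨z, hz⟩ := this
        exact nontrivial_of_ne ⟨e z, LinearMap.mem_range_self e z⟩ 0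
          (fun hcon => hz (by simpa using congrArg Subtype.val hcon))
      -- finite dimensionality of N₁ over k
      haveI : FiniteDimensional k (N₁.restrictScalars k) := inferInstance
      have eqk : (N₁.restrictScalars k) ≃ₗ[k] N₁ :=
        (Submodule.restrictScalarsEquiv k Λ L N₁).restrictScalars k
      haveI hfd1 : FiniteDimensional k N₁ :=
        Module.Finite.equiv (M := N₁.restrictScalars k) eqk
      have hne_top : N₁ ≠ ⊤ := by
        intro htop
        apply he1
        apply LinearMap.ext; intro x
        have hx : x ∈ N₁ := htop ▸ Submodule.mem_top
        simpa using heid x hx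
      have hlt : Module.finrank k N₁ < n := by
        have h1 : Module.finrank k N₁ = Module.finrank k (N₁.restrictScalars k) :=
          (LinearEquiv.finrank_eq eqk).symm
        have h2 : (N₁.restrictScalars k) < ⊤ := by
          rcases lt_or_eq_of_le (le_top : N₁.restrictScalars k ≤ ⊤) with h | h
          · exact h
          · exfalso; apply hne_top
            rw [eq_top_iff]; intro x _
            have : x ∈ N₁.restrictScalars k := h ▸ Submodule.mem_top
            exact this
        have := Submodule.finrank_lt (K := k) (V := L) h2.ne
        omega
      obtain ⟨N', π', hπ', hind'⟩ := IH (Module.finrank k N₁) (hrank ▸ hlt) N₁ rfl hnt1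
      set eqv := Submodule.equivMapOfInjective N₁.subtype (Submodule.injective_subtype N₁) N'
        with heqv
      refine ⟨N'.map N₁.subtype, ?_, ?_, IsIndecomp.of_equiv eqv hind'⟩
      · exact eqv.toLinearMap ∘ₗ π' ∘ₗ (e.codRestrict N₁ (fun x => LinearMap.mem_range_self e x))
      · intro y
        obtain ⟨y', rfl⟩ := eqv.surjective y
        have hcoe : (↑(eqv y') : L) = N₁.subtype ↑y' :=
          Submodule.coe_equivMapOfInjective_apply _ _ _ _
        simp only [LinearMap.coe_comp, Function.comp_apply, LinearEquiv.coe_coe]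
        have hpe : (e.codRestrict N₁ (fun x => LinearMap.mem_range_self e x)) (↑(eqv y') : L)
            = (↑y' : N₁) := by
          apply Subtype.ext
          simp only [LinearMap.codRestrict_apply]
          rw [hcoe]
          exact heid _ (↑y' : N₁).2
        rw [hpe, hπ']

/-- Type synonym used to carry a twisted module structure. -/
def TwistCarrier (L : Type u) : Type u := L

lemma aux_twisted_rad {k Λ : Type u} [Field k] [Ring Λ] [Algebra k Λ]
    {P P' : Type u} [AddCommGroup P] [Module Λ P] [AddCommGroup P'] [Module Λ P']
    {f : P →ₗ[Λ] P'} (hf : IsRadHom k Λ f) (φ : Λ ≃ₐ[k] Λ)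
    (L : Type u) [AddCommGroup L] [Module Λ L] [Module k L] [IsScalarTower k Λ L]
    [FiniteDimensional k L] (hind : IsIndecomp Λ L)
    (s : L →+ P) (hs : ∀ (r : Λ) (x : L), s ((φ r) • x) = r • s x)
    (t : P' →+ L) (ht : ∀ (r : Λ) (p : P'), t (r • p) = (φ r) • t p) :
    ¬ Function.Bijective (fun x : L => t (f (s x))) := by
  letI iAG : AddCommGroup (TwistCarrier L) := ‹AddCommGroup L›
  letI iM : Module Λ (TwistCarrier L) := Module.compHom L (φ : Λ →+* Λ)
  have hsmul : ∀ (r : Λ) (x : TwistCarrier L), r • x = (φ r) • (show L from x) := fun _ _ => rfl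
  letI iMk : Module k (TwistCarrier L) := ‹Module k L›
  letI iT : IsScalarTower k Λ (TwistCarrier L) :=
    ⟨fun c r x => by rw [hsmul, hsmul, map_smul, smul_assoc]; rfl⟩
  letI iFD : FiniteDimensional k (TwistCarrier L) := ‹FiniteDimensional k L›
  have hind' : IsIndecomp Λ (TwistCarrier L) := by
    refine ⟨hind.1, ?_⟩
    intro e he
    set e₀ : L →ₗ[Λ] L :=
      { toFun := fun x => e x
        map_add' := fun x y => e.map_add x y
        map_smul' := fun r x => by
          have := e.map_smul (φ.symm r) x
          have h3 : φ (φ.symm r) = r := φ.apply_symm_apply r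
          have h2 : (φ.symm r • (show TwistCarrier L from x) : TwistCarrier L) = (show L from r • x) := by
            show φ (φ.symm r) • x = r • x; rw [h3]
          rw [hsmul, h3] at this
          exact (congrArg e h2).symm.trans this } with he₀
    have h0 : e₀ ∘ₗ e₀ = e₀ := by
      apply LinearMap.ext; intro x
      exact LinearMap.ext_iff.mp he x
    rcases hind.2 e₀ h0 with h | h
    · left; apply LinearMap.ext; intro x
      exact LinearMap.ext_iff.mp h x
    · right; apply LinearMap.ext; intro x
      exact LinearMap.ext_iff.mp h x
  set sL : TwistCarrier L →ₗ[Λ] P :=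
    { toFun := fun x => s x
      map_add' := fun x y => s.map_add x y
      map_smul' := fun r x => by rw [hsmul]; exact hs r x } with hsL
  set tL : P' →ₗ[Λ] TwistCarrier L :=
    { toFun := fun p => t p
      map_add' := fun x y => t.map_add x y
      map_smul' := fun r p => by exact ht r p } with htL
  have := hf (TwistCarrier L) hind' sL tL
  intro hbij
  exact this hbij

section induced
variable {k Λ G A : Type u} [Field k] [Ring Λ] [Algebra k Λ]
    [Group G] [Fintype G] {σ : G →* (Λ ≃ₐ[k] Λ)} [Ring A] [Algebra k A]
    (S : SkewGroupAlgebra k Λ G σ A)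
    (P : Type u) [AddCommGroup P] [Module Λ P] [Module.Projective Λ P] [Module.Finite Λ P]
    (IP : Type u) [AddCommGroup IP] [Module A IP] (hIP : IsInducedModule S P IP)

/-- uniqueness of A-linear maps agreeing on the image of `unit` -/
lemma induced_ext {X : Type u} [AddCommGroup X] [Module A X]
    (F₁ F₂ : IP →ₗ[A] X) (h : ∀ m, F₁ (hIP.unit m) = F₂ (hIP.unit m)) : F₁ = F₂ := by
  have hsemi : ∀ (r : Λ) (m : P), F₂ (hIP.unit (r • m)) = S.ι r • F₂ (hIP.unit m) := by
    intro r m; rw [hIP.unit_smul, map_smul]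
  obtain ⟨F₀, hF₀, huniq⟩ := hIP.universal X (F₂.toAddMonoidHom.comp hIP.unit) hsemi
  have h2 : F₂ = F₀ := huniq F₂ (fun m => rfl)
  have h1 : F₁ = F₀ := huniq F₁ (fun m => h m)
  rw [h1, h2]

lemma induced_main :
    Module.Projective A IP ∧ ∃ p : G → IP → P,
      (∀ g (x y : IP), p g (x + y) = p g x + p g y) ∧
      (∀ g (r : Λ) (x : IP), p g (S.ι r • x) = σ g⁻¹ r • p g x) ∧
      (∀ x : IP, (∑ g : G, (S.u g : A) • (hIP.unit (p g x) : IP)) = x) := by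
  classical
  -- basic facts about σ
  have hσ : ∀ (g : G) (r : Λ), σ g (σ g⁻¹ r) = r := by
    intro g r
    have h1 : σ g * σ g⁻¹ = 1 := by rw [← map_mul, mul_inv_cancel, map_one]
    calc σ g (σ g⁻¹ r) = (σ g * σ g⁻¹) r := rfl
    _ = r := by rw [h1]; rfl
  -- skew commutation in the other direction
  have hskew' : ∀ (g : G) (r : Λ), S.ι r * (S.u g : A) = (S.u g : A) * S.ι (σ g⁻¹ r) := by
    intro g r
    rw [S.skew_comm g (σ g⁻¹ r), hσ]
  -- coefficients
  set c : A → G → Λ := fun a => (S.repr_unique a).choose with hc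
  have hcval : ∀ a : A, a = ∑ g : G, S.ι (c a g) * (S.u g : A) :=
    fun a => (S.repr_unique a).choose_spec.1
  have hcuniq : ∀ (a : A) (d : G → Λ), (a = ∑ g : G, S.ι (d g) * (S.u g : A)) → d = c a :=
    fun a d hd => (S.repr_unique a).choose_spec.2 d hd
  have hcadd : ∀ a b : A, c (a + b) = c a + c b := by
    intro a b
    refine (hcuniq (a + b) (c a + c b) ?_).symm
    conv_lhs => rw [hcval a, hcval b]
    rw [← Finset.sum_add_distrib]
    refine Finset.sum_congr rfl fun g _ => ?_
    simp [add_mul]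
  have hcsmul : ∀ (r : Λ) (a : A), c (S.ι r * a) = fun g => r * c a g := by
    intro r a
    refine (hcuniq _ _ ?_).symm
    conv_lhs => rw [hcval a]
    rw [Finset.mul_sum]
    refine Finset.sum_congr rfl fun g _ => ?_
    rw [map_mul, mul_assoc]
  -- choose a finite free presentation of P
  obtain ⟨n, q, hq⟩ := Module.Finite.exists_fin' Λ P
  obtain ⟨ρ, hρ⟩ := Module.projective_lifting_property q LinearMap.id hq
  have hsingle : ∀ (r : Λ) (i : Fin n),
      r • (Pi.single i (1 : Λ) : Fin n → Λ) = Pi.single i r := by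
    intro r i
    funext j
    rw [Pi.smul_apply]
    by_cases hij : i = j
    · subst hij; simp
    · simp [Pi.single_apply, hij]
  -- the map R : IP → (Fin n → A)
  set fadd : P →+ (Fin n → A) :=
    AddMonoidHom.mk' (fun m => fun i => S.ι (ρ m i))
      (by intro x y; funext i; simp [map_add]) with hfadd
  have hsemi : ∀ (r : Λ) (m : P), fadd (r • m) = S.ι r • fadd m := by
    intro r m; funext i
    show S.ι (ρ (r • m) i) = (S.ι r • fadd m) i
    rw [map_smul]
    show S.ι ((r • ρ m) i) = S.ι r * S.ι (ρ m i)
    rw [Pi.smul_apply, smul_eq_mul, map_mul]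
  obtain ⟨R, hR, -⟩ := hIP.universal (Fin n → A) fadd hsemi
  -- the map T : (Fin n → A) → IP
  set T : (Fin n → A) →ₗ[A] IP :=
    ∑ i : Fin n, (LinearMap.toSpanSingleton A IP
      (hIP.unit (q (Pi.single i 1)))).comp (LinearMap.proj i) with hT
  have hTapp : ∀ v : Fin n → A, T v = ∑ i : Fin n, v i • hIP.unit (q (Pi.single i 1)) := by
    intro v
    rw [hT]
    simp [LinearMap.sum_apply, LinearMap.toSpanSingleton_apply]
  have hTR : ∀ x : IP, T (R x) = x := by
    have : T ∘ₗ R = LinearMap.id := by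
      apply induced_ext S P IP hIP
      intro m
      rw [LinearMap.comp_apply, LinearMap.id_apply, hR, hTapp]
      have h1 : ∀ i : Fin n, fadd m i • hIP.unit (q (Pi.single i 1))
          = hIP.unit (ρ m i • q (Pi.single i 1)) := by
        intro i
        rw [hIP.unit_smul]
        rfl
      rw [Finset.sum_congr rfl (fun i _ => h1 i),
        ← map_sum hIP.unit (fun i => ρ m i • q (Pi.single i 1)) Finset.univ]
      have h2 : (∑ i : Fin n, ρ m i • q (Pi.single i 1)) = q (ρ m) := by
        have e1 : ∀ i : Fin n,
            ρ m i • q (Pi.single i 1) = q ((Pi.single i (ρ m i) : Fin n → Λ)) := by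
          intro i
          rw [← map_smul q (ρ m i) ((Pi.single i (1 : Λ) : Fin n → Λ)), hsingle]
        rw [Finset.sum_congr rfl fun i _ => e1 i,
          ← map_sum q (fun i => (Pi.single i (ρ m i) : Fin n → Λ)) Finset.univ]
        congr 1
        funext j
        rw [Finset.sum_apply]
        exact Fintype.sum_pi_single j (fun i => ρ m i)
      rw [h2]
      have := LinearMap.ext_iff.mp hρ m
      simp only [LinearMap.comp_apply, LinearMap.id_apply] at this
      rw [this]
    intro x
    exact LinearMap.ext_iff.mp this x
  constructor
  · -- projectivity
    exact Module.Projective.of_split R T (by apply LinearMap.ext; intro x; exact hTR x)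
  · -- the component maps
    refine ⟨fun g x => q (fun i => σ g⁻¹ (c (R x i) g)), ?_, ?_, ?_⟩
    · intro g x y
      show q (fun i => σ g⁻¹ (c (R (x + y) i) g))
          = q (fun i => σ g⁻¹ (c (R x i) g)) + q (fun i => σ g⁻¹ (c (R y i) g))
      rw [← map_add q]
      congr 1
      funext i
      have h1 : c (R (x + y) i) g = c (R x i) g + c (R y i) g := by
        rw [map_add R x y, show (R x + R y) i = R x i + R y i from rfl, hcadd]
        rfl
      show σ g⁻¹ (c (R (x + y) i) g) = _
      rw [h1, map_add]
      rfl
    · intro g r x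
      show q (fun i => σ g⁻¹ (c (R (S.ι r • x) i) g)) = σ g⁻¹ r • q (fun i => σ g⁻¹ (c (R x i) g))
      rw [← map_smul q]
      congr 1
      funext i
      have h1 : c (R (S.ι r • x) i) g = r * c (R x i) g := by
        rw [map_smul R (S.ι r) x, show (S.ι r • R x) i = S.ι r * R x i from rfl, hcsmul]
      show σ g⁻¹ (c (R (S.ι r • x) i) g) = _
      rw [h1, map_mul]
      rfl
    · intro x
      show (∑ g : G, (S.u g : A) • hIP.unit (q (fun i => σ g⁻¹ (c (R x i) g)))) = x
      conv_rhs => rw [← hTR x, hTapp]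
      symm
      calc ∑ i : Fin n, R x i • hIP.unit (q (Pi.single i 1))
          = ∑ i : Fin n, ∑ g : G,
              (S.ι (c (R x i) g) * (S.u g : A)) • hIP.unit (q (Pi.single i 1)) := by
            refine Finset.sum_congr rfl fun i _ => ?_
            conv_lhs => rw [hcval (R x i)]
            rw [Finset.sum_smul]
        _ = ∑ g : G, ∑ i : Fin n,
              (S.u g : A) • hIP.unit (q (Pi.single i (σ g⁻¹ (c (R x i) g)))) := by
            rw [Finset.sum_comm]
            refine Finset.sum_congr rfl fun g _ => Finset.sum_congr rfl fun i _ => ?_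
            rw [hskew', mul_smul, ← hIP.unit_smul, ← map_smul q, hsingle]
        _ = ∑ g : G, (S.u g : A) • hIP.unit (q (fun i => σ g⁻¹ (c (R x i) g))) := by
            refine Finset.sum_congr rfl fun g _ => ?_
            rw [← Finset.smul_sum,
              ← map_sum hIP.unit (fun i => q (Pi.single i (σ g⁻¹ (c (R x i) g)))) Finset.univ,
              ← map_sum q (fun i => (Pi.single i (σ g⁻¹ (c (R x i) g)) : Fin n → Λ)) Finset.univ]
            have e3 : (∑ i : Fin n, (Pi.single i (σ g⁻¹ (c (R x i) g)) : Fin n → Λ))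
                = fun i => σ g⁻¹ (c (R x i) g) := by
              funext j
              rw [Finset.sum_apply]
              exact Fintype.sum_pi_single j (fun i => σ g⁻¹ (c (R x i) g))
            rw [e3]


/-- If `f : P → P'` is a radical morphism between finitely generated projective
`Λ`-modules, then the induced morphism `A ⊗_Λ f : A ⊗_Λ P → A ⊗_Λ P'` is a radical
morphism between (projective) `A`-modules. -/
theorem induced_radical_of_radical
    (k Λ G A : Type u) [Field k] [Ring Λ] [Algebra k Λ] [FiniteDimensional k Λ]
    [Group G] [Fintype G] (σ : G →* (Λ ≃ₐ[k] Λ)) [Ring A] [Algebra k A]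
    [FiniteDimensional k A]
    (S : SkewGroupAlgebra k Λ G σ A)
    (P P' : Type u)
    [AddCommGroup P] [Module Λ P] [Module.Projective Λ P] [Module.Finite Λ P]
    [AddCommGroup P'] [Module Λ P'] [Module.Projective Λ P'] [Module.Finite Λ P']
    (f : P →ₗ[Λ] P') (hf : IsRadHom k Λ f)
    (IP IP' : Type u) [AddCommGroup IP] [Module A IP] [AddCommGroup IP'] [Module A IP']
    (hIP : IsInducedModule S P IP) (hIP' : IsInducedModule S P' IP')
    (F : IP →ₗ[A] IP') (hF : ∀ x : P, F (hIP.unit x) = hIP'.unit (f x)) :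
    IsRadHom k A F ∧ Module.Projective A IP ∧ Module.Projective A IP' := by
  obtain ⟨hprojP, p, hpadd, hpsmul, hpdec⟩ := induced_main S P IP hIP
  obtain ⟨hprojP', -⟩ := induced_main S P' IP' hIP'
  refine ⟨?_, hprojP, hprojP'⟩
  intro L _ _ _ _ _ hindA sA tA hbij
  -- basic facts about σ
  have hσ : ∀ (g : G) (r : Λ), σ g (σ g⁻¹ r) = r := by
    intro g r
    have h1 : σ g * σ g⁻¹ = 1 := by rw [← map_mul, mul_inv_cancel, map_one]
    calc σ g (σ g⁻¹ r) = (σ g * σ g⁻¹) r := rfl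
    _ = r := by rw [h1]; rfl
  have hσ' : ∀ (g : G) (r : Λ), σ g⁻¹ (σ g r) = r := by
    intro g r
    have h1 : σ g⁻¹ * σ g = 1 := by rw [← map_mul, inv_mul_cancel, map_one]
    calc σ g⁻¹ (σ g r) = (σ g⁻¹ * σ g) r := rfl
    _ = r := by rw [h1]; rfl
  -- Λ-module structure on L via ι
  letI instΛL : Module Λ L := Module.compHom L (S.ι.toRingHom : Λ →+* A)
  have hsmulL : ∀ (r : Λ) (x : L), r • x = (S.ι r : A) • x := fun _ _ => rfl
  letI instTow : IsScalarTower k Λ L :=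
    ⟨fun cc r x => by rw [hsmulL, hsmulL, map_smul, smul_assoc]⟩
  haveI hntL : Nontrivial L := hindA.1
  obtain ⟨N, π, hπ, hindN⟩ := aux_exists_indec_summand k Λ (Module.finrank k L) L rfl hntL
  -- instances on ↥N
  have eqk : (N.restrictScalars k) ≃ₗ[k] N :=
    (Submodule.restrictScalarsEquiv k Λ L N).restrictScalars k
  haveI hfdN : FiniteDimensional k N :=
    Module.Finite.equiv (M := N.restrictScalars k) eqk
  haveI hnoeN : IsNoetherian Λ N :=
    isNoetherian_of_tower k (IsNoetherian.iff_fg.mpr hfdN)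
  haveI hartkN : IsArtinian k N := isArtinian_of_fg_of_artinian'
  haveI hartN : IsArtinian Λ N := isArtinian_of_tower k hartkN
  -- splitting of the bijective composite
  set b := LinearEquiv.ofBijective (tA ∘ₗ F ∘ₗ sA) hbij with hb
  set ψ : IP' →ₗ[A] L := b.symm.toLinearMap ∘ₗ tA with hψdef
  have hψ : ∀ z : L, ψ (F (sA z)) = z := by
    intro z
    show b.symm (tA (F (sA z))) = z
    have h1 : tA (F (sA z)) = b z := rfl
    rw [h1, b.symm_apply_apply]
  -- the component maps
  set sg : G → (↥N → P) := fun g y => p g (sA ↑y) with hsg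
  set tg : G → (P' → ↥N) := fun g w => π (ψ ((S.u g : A) • hIP'.unit w)) with htg
  have hsgadd : ∀ g (y z : ↥N), sg g (y + z) = sg g y + sg g z := by
    intro g y z
    show p g (sA ↑(y + z)) = _
    rw [Submodule.coe_add, map_add, hpadd]
  have hsgsem : ∀ g (r : Λ) (y : ↥N), sg g (σ g r • y) = r • sg g y := by
    intro g r y
    show p g (sA ↑(σ g r • y)) = r • p g (sA ↑y)
    rw [Submodule.coe_smul, hsmulL, map_smul, hpsmul, hσ']
  have htgadd : ∀ g (w w' : P'), tg g (w + w') = tg g w + tg g w' := by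
    intro g w w'
    show π (ψ ((S.u g : A) • hIP'.unit (w + w'))) = _
    rw [map_add, smul_add, map_add, map_add]
  have htgsem : ∀ g (r : Λ) (w : P'), tg g (r • w) = σ g r • tg g w := by
    intro g r w
    show π (ψ ((S.u g : A) • hIP'.unit (r • w))) = σ g r • π (ψ ((S.u g : A) • hIP'.unit w))
    rw [hIP'.unit_smul, smul_smul, S.skew_comm, mul_smul, ψ.map_smul, ← hsmulL, π.map_smul]
  set E : G → (↥N →ₗ[Λ] ↥N) := fun g =>
    { toFun := fun y => tg g (f (sg g y))
      map_add' := fun y z => by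
        show tg g (f (sg g (y + z))) = tg g (f (sg g y)) + tg g (f (sg g z))
        rw [hsgadd, map_add, htgadd]
      map_smul' := fun r y => by
        show tg g (f (sg g (r • y))) = r • tg g (f (sg g y))
        have h1 : sg g (r • y) = σ g⁻¹ r • sg g y := by
          conv_lhs => rw [show r = σ g (σ g⁻¹ r) from (hσ g r).symm]
          rw [hsgsem]
        rw [h1, map_smul, htgsem, hσ] } with hE
  have hnotbij : ∀ g : G, ¬ Function.Bijective ⇑(E g) := by
    intro g
    exact aux_twisted_rad hf (σ g) (↥N) hindN
      (AddMonoidHom.mk' (sg g) (hsgadd g)) (hsgsem g)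
      (AddMonoidHom.mk' (tg g) (htgadd g)) (htgsem g)
  have hsum : (∑ g : G, E g) = LinearMap.id := by
    apply LinearMap.ext
    intro y
    rw [LinearMap.sum_apply, LinearMap.id_apply]
    have h1 : ∀ g : G, (E g) y = π (ψ (F ((S.u g : A) • hIP.unit (p g (sA ↑y))))) := by
      intro g
      show tg g (f (p g (sA ↑y))) = _
      show π (ψ ((S.u g : A) • hIP'.unit (f (p g (sA ↑y))))) = _
      rw [← hF, ← map_smul F]
    rw [Finset.sum_congr rfl (fun g _ => h1 g),
      ← map_sum π (fun g => ψ (F ((S.u g : A) • hIP.unit (p g (sA ↑y))))) Finset.univ,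
      ← map_sum ψ (fun g => F ((S.u g : A) • hIP.unit (p g (sA ↑y)))) Finset.univ,
      ← map_sum F (fun g => (S.u g : A) • hIP.unit (p g (sA ↑y))) Finset.univ,
      show (∑ g : G, (S.u g : A) • hIP.unit (p g (sA ↑y))) = sA ↑y from hpdec (sA ↑y),
      hψ, hπ]
  have hbijsum : Function.Bijective ⇑(∑ g : G, E g) := by
    rw [hsum]
    exact Function.bijective_id
  exact aux_sum_not_bijective hindN Finset.univ E (fun g _ => hnotbij g) hbijsum
end induced
end
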